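/- arXiv:math/0111034 — 5 statements merged into one kernel-verified Lean document; each statement's English description precedes it below -/
import Mathlib

section
/- Let G be a finite graph with nonnegative real edge weights containing an urban-renewal patch with weights w, x, y, z satisfying wz + xy ≠ 0, and let G' be the urban-renewed graph. Then the total weight of the perfect matchings of G that contain the pendant edges aA and bB but contain neither cC nor dD equals (wz + xy) times the total weight of the perfect matchings of G' that contain the edge AB but not the edge CD. -/
open scoped Classical

/-- A finset `M` of edges is a perfect matching of the graph `G` relative to the
vertex set `S`: every edge of `M` is an edge of `G`, and every vertex of `S`
belongs to exactly one edge of `M`. -/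
def IsPM {V : Type} (G : SimpleGraph V) (S : Set V) (M : Finset (Sym2 V)) : Prop :=
  (∀ e ∈ M, e ∈ G.edgeSet) ∧ ∀ v ∈ S, ∃! e, e ∈ M ∧ v ∈ e

/-- `mSum G S ω` is the sum, over all perfect matchings `M` of `G` relative to the
vertex set `S`, of the product of the `ω`-weights of the edges of `M`. -/
noncomputable def mSum {V : Type} (G : SimpleGraph V) (S : Set V) (ω : Sym2 V → ℝ) : ℝ :=
  ∑ᶠ M ∈ {M : Finset (Sym2 V) | IsPM G S M}, ∏ e ∈ M, ω e

/-- `G` together with the weights `ω` contains an urban-renewal patch on the eight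
distinct vertices `A B C D a b c d`, with inner-edge weights `w x y z` and pendant
edges `aA, bB, cC, dD` of weight `1`. -/
structure UrbanPatch {V : Type} (G : SimpleGraph V) (ω : Sym2 V → ℝ)
    (A B C D a b c d : V) (w x y z : ℝ) : Prop where
  distinct : List.Pairwise (· ≠ ·) [A, B, C, D, a, b, c, d]
  adj_a : ∀ v, G.Adj a v ↔ v = b ∨ v = c ∨ v = A
  adj_b : ∀ v, G.Adj b v ↔ v = a ∨ v = d ∨ v = B
  adj_c : ∀ v, G.Adj c v ↔ v = a ∨ v = d ∨ v = C
  adj_d : ∀ v, G.Adj d v ↔ v = b ∨ v = c ∨ v = D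
  wt_ab : ω s(a, b) = w
  wt_ac : ω s(a, c) = x
  wt_bd : ω s(b, d) = y
  wt_cd : ω s(c, d) = z
  wt_aA : ω s(a, A) = 1
  wt_bB : ω s(b, B) = 1
  wt_cC : ω s(c, C) = 1
  wt_dD : ω s(d, D) = 1
  nonadj_AB : ¬ G.Adj A B
  nonadj_AC : ¬ G.Adj A C
  nonadj_AD : ¬ G.Adj A D
  nonadj_BC : ¬ G.Adj B C
  nonadj_BD : ¬ G.Adj B D
  nonadj_CD : ¬ G.Adj C D

/-- The urban-renewed graph: delete the four inner vertices `a b c d` together with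
all their incident edges, and add the four new edges `AB, AC, BD, CD`. -/
def renewGraph {V : Type} (G : SimpleGraph V) (A B C D a b c d : V) : SimpleGraph V :=
  SimpleGraph.fromRel fun u v =>
    (G.Adj u v ∧ u ∉ ({a, b, c, d} : Set V) ∧ v ∉ ({a, b, c, d} : Set V)) ∨
    (u = A ∧ v = B) ∨ (u = A ∧ v = C) ∨ (u = B ∧ v = D) ∨ (u = C ∧ v = D)

/-- The urban-renewed weights: the new edges `AB, AC, BD, CD` get weights
`z/(wz+xy), y/(wz+xy), x/(wz+xy), w/(wz+xy)`; other edges keep their weights. -/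
noncomputable def renewWeight {V : Type} (ω : Sym2 V → ℝ) (A B C D : V)
    (w x y z : ℝ) : Sym2 V → ℝ := fun e =>
  if e = s(A, B) then z / (w * z + x * y)
  else if e = s(A, C) then y / (w * z + x * y)
  else if e = s(B, D) then x / (w * z + x * y)
  else if e = s(C, D) then w / (w * z + x * y)
  else ω e


/-- `mSumP G S ω P` is the sum, over all perfect matchings `M` of `G` relative to
the vertex set `S` that moreover satisfy the predicate `P`, of the product of the
`ω`-weights of the edges of `M`. -/
noncomputable def mSumP {V : Type} (G : SimpleGraph V) (S : Set V) (ω : Sym2 V → ℝ)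
    (P : Finset (Sym2 V) → Prop) : ℝ :=
  ∑ᶠ M ∈ {M : Finset (Sym2 V) | IsPM G S M ∧ P M}, ∏ e ∈ M, ω e

/-!
A perfect matching of `G` containing `aA` and `bB` but not `cC` is forced to contain `cd`, since
`c` can no longer be matched to `a` or `C`. Removing `aA, bB, cd` therefore leaves a perfect
matching `R` of `G - {a, b, c, d, A, B}`, and every such `R` arises exactly once. Likewise a
perfect matching of `G'` containing `AB` but not `CD` is `AB` together with such an `R`, because
away from `{a, b, c, d, A, B}` the only edge of `G'` that is not an edge of `G` is `CD`. The two
matchings built from `R` have weights `z · ω(R)` and `z / (wz + xy) · ω(R)`.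
-/

section Matchings

variable {V : Type} {G G' : SimpleGraph V} {S T : Set V} {M R : Finset (Sym2 V)} {u v t : V}

/-- The edge sets of the perfect matchings of `G - T`. -/
def matchingsAvoiding (G : SimpleGraph V) (T : Set V) : Set (Finset (Sym2 V)) :=
  {M | IsPM G Tᶜ M ∧ ∀ e ∈ M, ∀ t ∈ e, t ∉ T}

theorem IsPM.eq_of_mem (h : IsPM G S M) (ht : t ∈ S) {e f : Sym2 V}
    (he : e ∈ M) (hte : t ∈ e) (hf : f ∈ M) (htf : t ∈ f) : e = f :=
  (h.2 t ht).unique ⟨he, hte⟩ ⟨hf, htf⟩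

theorem IsPM.exists_adj_mem (h : IsPM G S M) (hv : v ∈ S) : ∃ w, G.Adj v w ∧ s(v, w) ∈ M := by
  obtain ⟨e, ⟨he, hve⟩, -⟩ := h.2 v hv
  refine ⟨Sym2.Mem.other hve, ?_, by rwa [Sym2.other_spec]⟩
  rw [← SimpleGraph.mem_edgeSet, Sym2.other_spec]
  exact h.1 e he

theorem notMem_of_mem_matchingsAvoiding (hR : R ∈ matchingsAvoiding G T) (hu : u ∈ T) (v : V) :
    s(u, v) ∉ R :=
  fun h => hR.2 _ h u (Sym2.mem_mk_left u v) hu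

theorem mem_matchingsAvoiding_iff_isPM (hG : ∀ e ∈ G.edgeSet, ∀ t ∈ e, t ∉ T) :
    M ∈ matchingsAvoiding G T ↔ IsPM G Tᶜ M :=
  ⟨And.left, fun h => ⟨h, fun e he => hG e (h.1 e he)⟩⟩

theorem mem_matchingsAvoiding_congr
    (h : ∀ e ∈ M, (∀ t ∈ e, t ∉ T) → (e ∈ G.edgeSet ↔ e ∈ G'.edgeSet)) :
    M ∈ matchingsAvoiding G T ↔ M ∈ matchingsAvoiding G' T :=
  ⟨fun ⟨⟨hE, hcov⟩, hav⟩ => ⟨⟨fun e he => (h e he (hav e he)).1 (hE e he), hcov⟩, hav⟩,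
   fun ⟨⟨hE, hcov⟩, hav⟩ => ⟨⟨fun e he => (h e he (hav e he)).2 (hE e he), hcov⟩, hav⟩⟩

theorem existsUnique_mem_insert_of_notMem {e : Sym2 V} (ht : t ∉ e) :
    (∃! g, g ∈ insert e R ∧ t ∈ g) ↔ ∃! g, g ∈ R ∧ t ∈ g :=
  existsUnique_congr fun g =>
    ⟨fun ⟨hg, htg⟩ => ⟨(Finset.mem_insert.1 hg).resolve_left (by rintro rfl; exact ht htg), htg⟩,
     fun ⟨hg, htg⟩ => ⟨Finset.mem_insert_of_mem hg, htg⟩⟩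

theorem existsUnique_mem_insert_of_mem {e : Sym2 V} (he : e ∉ R) (ht : t ∈ e) :
    (∃! g, g ∈ insert e R ∧ t ∈ g) ↔ ∀ f ∈ R, t ∉ f := by
  constructor
  · rintro ⟨g, -, huniq⟩ f hf htf
    have hfe : f = e :=
      (huniq f ⟨Finset.mem_insert_of_mem hf, htf⟩).trans
        (huniq e ⟨Finset.mem_insert_self e R, ht⟩).symm
    exact he (hfe ▸ hf)
  · exact fun h => ⟨e, ⟨Finset.mem_insert_self e R, ht⟩, fun g ⟨hg, htg⟩ =>
      (Finset.mem_insert.1 hg).resolve_right fun hgR => h g hgR htg⟩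

theorem insert_mem_matchingsAvoiding_iff (hu : u ∉ T) (hv : v ∉ T) (hR : s(u, v) ∉ R) :
    insert s(u, v) R ∈ matchingsAvoiding G T ↔
      G.Adj u v ∧ R ∈ matchingsAvoiding G (T ∪ {u, v}) := by
  have huv : ∀ t, t ∈ T ∪ {u, v} ↔ t ∈ T ∨ t ∈ s(u, v) := by
    intro t
    simp only [Set.mem_union, Set.mem_insert_iff, Set.mem_singleton_iff, Sym2.mem_iff]
  constructor
  · rintro ⟨⟨hE, hcov⟩, hav⟩
    have hcovuv : ∀ t ∈ s(u, v), ∀ f ∈ R, t ∉ f := fun t ht =>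
      (existsUnique_mem_insert_of_mem hR ht).1
        (hcov t (hav _ (Finset.mem_insert_self _ _) t ht))
    refine ⟨hE _ (Finset.mem_insert_self _ _),
      ⟨fun f hf => hE f (Finset.mem_insert_of_mem hf), fun t ht => ?_⟩, fun f hf t htf ht => ?_⟩
    · rw [Set.mem_compl_iff, huv, not_or] at ht
      exact (existsUnique_mem_insert_of_notMem ht.2).1 (hcov t ht.1)
    · rcases (huv t).1 ht with htT | htuv
      · exact hav f (Finset.mem_insert_of_mem hf) t htf htT
      · exact hcovuv t htuv f hf htf
  · rintro ⟨hadj, ⟨hE, hcov⟩, hav⟩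
    refine ⟨⟨Finset.forall_mem_insert _ _ _ |>.2 ⟨hadj, hE⟩, fun t ht => ?_⟩,
      Finset.forall_mem_insert _ _ _ |>.2 ⟨?_, fun f hf t htf htT => hav f hf t htf (Or.inl htT)⟩⟩
    · by_cases htuv : t ∈ s(u, v)
      · exact (existsUnique_mem_insert_of_mem hR htuv).2 fun f hf htf =>
          hav f hf t htf ((huv t).2 (Or.inr htuv))
      · exact (existsUnique_mem_insert_of_notMem htuv).2
          (hcov t (by rw [Set.mem_compl_iff, huv]; tauto))
    · intro t ht
      rcases Sym2.mem_iff.1 ht with rfl | rfl <;> assumption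

end Matchings

theorem mem_renewGraph_edgeSet_iff {V : Type} {G : SimpleGraph V} {A B C D a b c d : V}
    {e : Sym2 V} (he : ∀ t ∈ e, t ∉ ({a, b, c, d, A, B} : Set V)) (hCD : e ≠ s(C, D)) :
    e ∈ (renewGraph G A B C D a b c d).edgeSet ↔ e ∈ G.edgeSet := by
  induction e using Sym2.ind with
  | h u v =>
    have hu := he u (Sym2.mem_mk_left u v)
    have hv := he v (Sym2.mem_mk_right u v)
    simp only [Set.mem_insert_iff, Set.mem_singleton_iff, not_or] at hu hv
    simp only [renewGraph, SimpleGraph.mem_edgeSet, SimpleGraph.fromRel_adj, Set.mem_insert_iff,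
      Set.mem_singleton_iff, Sym2.eq_iff, ne_eq] at hCD ⊢
    have : G.Adj u v → u ≠ v := G.ne_of_adj
    have : G.Adj v u ↔ G.Adj u v := G.adj_comm v u
    grind

namespace UrbanPatch

variable {V : Type} {G : SimpleGraph V} {ω : Sym2 V → ℝ} {A B C D a b c d : V} {w x y z : ℝ}
  {M R : Finset (Sym2 V)}

theorem pairwise_ne (hp : UrbanPatch G ω A B C D a b c d w x y z) :
    A ≠ B ∧ A ≠ C ∧ A ≠ D ∧ A ≠ a ∧ A ≠ b ∧ A ≠ c ∧ A ≠ d ∧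
    B ≠ C ∧ B ≠ D ∧ B ≠ a ∧ B ≠ b ∧ B ≠ c ∧ B ≠ d ∧
    C ≠ D ∧ C ≠ a ∧ C ≠ b ∧ C ≠ c ∧ C ≠ d ∧
    D ≠ a ∧ D ≠ b ∧ D ≠ c ∧ D ≠ d ∧
    a ≠ b ∧ a ≠ c ∧ a ≠ d ∧ b ≠ c ∧ b ≠ d ∧ c ≠ d := by
  simpa [and_assoc] using hp.distinct

theorem cd_mem (hp : UrbanPatch G ω A B C D a b c d w x y z) (hM : IsPM G Set.univ M)
    (haA : s(a, A) ∈ M) (hcC : s(c, C) ∉ M) : s(c, d) ∈ M := by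
  obtain ⟨t, hct, hctM⟩ := hM.exists_adj_mem (Set.mem_univ c)
  rcases (hp.adj_c t).1 hct with rfl | rfl | rfl
  · have hca := hM.eq_of_mem (Set.mem_univ t) hctM (Sym2.mem_mk_right c t) haA
      (Sym2.mem_mk_left t A)
    have := hp.pairwise_ne
    grind [Sym2.eq_iff]
  · exact hctM
  · exact absurd hctM hcC

theorem isPM_insert_aA_bB_cd_iff (hp : UrbanPatch G ω A B C D a b c d w x y z)
    (hR : s(a, A) ∉ R ∧ s(b, B) ∉ R ∧ s(c, d) ∉ R) :
    IsPM G Set.univ (insert s(a, A) (insert s(b, B) (insert s(c, d) R))) ↔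
      R ∈ matchingsAvoiding G {a, b, c, d, A, B} := by
  have := hp.pairwise_ne
  have hadj : G.Adj a A ∧ G.Adj b B ∧ G.Adj c d := by simp [hp.adj_a, hp.adj_b, hp.adj_c]
  rw [← Set.compl_empty, ← mem_matchingsAvoiding_iff_isPM (by simp),
    insert_mem_matchingsAvoiding_iff (by simp) (by simp) (by simp; grind),
    insert_mem_matchingsAvoiding_iff (by simp; grind) (by simp; grind) (by simp; grind),
    insert_mem_matchingsAvoiding_iff (by simp; grind) (by simp; grind) hR.2.2]
  simp only [hadj, true_and]
  convert Iff.rfl using 3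
  ext t
  simp only [Set.union_insert, Set.union_singleton, Set.mem_insert_iff, Set.mem_singleton_iff]
  tauto

theorem notMem_insert_aA_bB_cd (hp : UrbanPatch G ω A B C D a b c d w x y z)
    (hR : R ∈ matchingsAvoiding G {a, b, c, d, A, B}) :
    s(a, A) ∉ insert s(b, B) (insert s(c, d) R) ∧ s(b, B) ∉ insert s(c, d) R ∧ s(c, d) ∉ R := by
  have := hp.pairwise_ne
  have hout : ∀ t ∈ ({a, b, c, d, A, B} : Set V), ∀ t', s(t, t') ∉ R :=
    fun t ht t' => notMem_of_mem_matchingsAvoiding hR ht t'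
  simp only [Finset.mem_insert, not_or]
  exact ⟨⟨by grind [Sym2.eq_iff], by grind [Sym2.eq_iff], hout a (by simp) A⟩,
    ⟨by grind [Sym2.eq_iff], hout b (by simp) B⟩, hout c (by simp) d⟩

theorem matchings_aA_bB_eq_image (hp : UrbanPatch G ω A B C D a b c d w x y z) :
    {M | IsPM G Set.univ M ∧ s(a, A) ∈ M ∧ s(b, B) ∈ M ∧ s(c, C) ∉ M ∧ s(d, D) ∉ M} =
      (fun R => insert s(a, A) (insert s(b, B) (insert s(c, d) R))) ''
        matchingsAvoiding G {a, b, c, d, A, B} := by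
  have := hp.pairwise_ne
  ext M
  constructor
  · rintro ⟨hM, haA, hbB, hcC, -⟩
    have hcd := hp.cd_mem hM haA hcC
    set R := ((M.erase s(a, A)).erase s(b, B)).erase s(c, d)
    have hMR : insert s(a, A) (insert s(b, B) (insert s(c, d) R)) = M := by
      rw [Finset.insert_erase (by simp [hcd]; grind), Finset.insert_erase (by simp [hbB]; grind),
        Finset.insert_erase haA]
    have hR : s(a, A) ∉ R ∧ s(b, B) ∉ R ∧ s(c, d) ∉ R := by simp [R]
    exact ⟨R, (hp.isPM_insert_aA_bB_cd_iff hR).1 (hMR ▸ hM), hMR⟩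
  · rintro ⟨R, hR, rfl⟩
    obtain ⟨-, -, hcd⟩ := hp.notMem_insert_aA_bB_cd hR
    refine ⟨(hp.isPM_insert_aA_bB_cd_iff ⟨notMem_of_mem_matchingsAvoiding hR (by simp) A,
      notMem_of_mem_matchingsAvoiding hR (by simp) B, hcd⟩).2 hR, by simp, by simp, ?_, ?_⟩
    · simp only [Finset.mem_insert, not_or]
      exact ⟨by grind [Sym2.eq_iff], by grind [Sym2.eq_iff], by grind [Sym2.eq_iff],
        notMem_of_mem_matchingsAvoiding hR (by simp) C⟩
    · simp only [Finset.mem_insert, not_or]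
      exact ⟨by grind [Sym2.eq_iff], by grind [Sym2.eq_iff], by grind [Sym2.eq_iff],
        notMem_of_mem_matchingsAvoiding hR (by simp) D⟩

theorem injOn_insert_aA_bB_cd (hp : UrbanPatch G ω A B C D a b c d w x y z) :
    Set.InjOn (fun R => insert s(a, A) (insert s(b, B) (insert s(c, d) R)))
      (matchingsAvoiding G {a, b, c, d, A, B}) :=
  Set.LeftInvOn.injOn (f₁' := fun M => ((M.erase s(a, A)).erase s(b, B)).erase s(c, d))
    fun R hR => by
      obtain ⟨h₁, h₂, h₃⟩ := hp.notMem_insert_aA_bB_cd hR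
      simp only [Finset.erase_insert h₁, Finset.erase_insert h₂, Finset.erase_insert h₃]

theorem prod_insert_aA_bB_cd (hp : UrbanPatch G ω A B C D a b c d w x y z)
    (hR : R ∈ matchingsAvoiding G {a, b, c, d, A, B}) :
    ∏ e ∈ insert s(a, A) (insert s(b, B) (insert s(c, d) R)), ω e = z * ∏ e ∈ R, ω e := by
  obtain ⟨h₁, h₂, h₃⟩ := hp.notMem_insert_aA_bB_cd hR
  rw [Finset.prod_insert h₁, Finset.prod_insert h₂, Finset.prod_insert h₃, hp.wt_aA, hp.wt_bB,
    hp.wt_cd, one_mul, one_mul]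

theorem notMem_of_mem_renewGraph_edgeSet (hp : UrbanPatch G ω A B C D a b c d w x y z)
    {e : Sym2 V} (he : e ∈ (renewGraph G A B C D a b c d).edgeSet) {t : V} (ht : t ∈ e) :
    t ∉ ({a, b, c, d} : Set V) := by
  have := hp.pairwise_ne
  induction e using Sym2.ind with
  | h u v =>
    simp only [renewGraph, SimpleGraph.mem_edgeSet, SimpleGraph.fromRel_adj] at he
    rcases Sym2.mem_iff.1 ht with rfl | rfl <;> grind

theorem isPM_renewGraph_insert_AB_iff (hp : UrbanPatch G ω A B C D a b c d w x y z)
    (hAB : s(A, B) ∉ R) (hCD : s(C, D) ∉ R) :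
    IsPM (renewGraph G A B C D a b c d) (Set.univ \ {a, b, c, d}) (insert s(A, B) R) ↔
      R ∈ matchingsAvoiding G {a, b, c, d, A, B} := by
  have := hp.pairwise_ne
  have hadj : (renewGraph G A B C D a b c d).Adj A B := by
    simp [renewGraph, SimpleGraph.fromRel_adj, hp.pairwise_ne.1]
  rw [← Set.compl_eq_univ_sdiff,
    ← mem_matchingsAvoiding_iff_isPM fun e he t ht => hp.notMem_of_mem_renewGraph_edgeSet he ht,
    insert_mem_matchingsAvoiding_iff (by simp; grind) (by simp; grind) hAB,
    show ({a, b, c, d} ∪ {A, B} : Set V) = {a, b, c, d, A, B} by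
      ext t; simp only [Set.mem_union, Set.mem_insert_iff, Set.mem_singleton_iff]; tauto]
  simp only [hadj, true_and]
  exact mem_matchingsAvoiding_congr fun e he hav =>
    mem_renewGraph_edgeSet_iff hav (by rintro rfl; exact hCD he)

theorem renewed_matchings_AB_eq_image (hp : UrbanPatch G ω A B C D a b c d w x y z) :
    {N | IsPM (renewGraph G A B C D a b c d) (Set.univ \ {a, b, c, d}) N ∧
        s(A, B) ∈ N ∧ s(C, D) ∉ N} =
      insert s(A, B) '' matchingsAvoiding G {a, b, c, d, A, B} := by
  ext N
  constructor
  · rintro ⟨hN, hAB, hCD⟩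
    refine ⟨N.erase s(A, B), ?_, Finset.insert_erase hAB⟩
    rw [← hp.isPM_renewGraph_insert_AB_iff (Finset.notMem_erase _ _)
      (fun h => hCD (Finset.mem_of_mem_erase h)), Finset.insert_erase hAB]
    exact hN
  · rintro ⟨R, hR, rfl⟩
    have hCD : s(C, D) ∉ R := fun h => hp.nonadj_CD (hR.1.1 _ h)
    have := hp.pairwise_ne
    refine ⟨(hp.isPM_renewGraph_insert_AB_iff
      (notMem_of_mem_matchingsAvoiding hR (by simp) B) hCD).2 hR, Finset.mem_insert_self _ _, ?_⟩
    simp only [Finset.mem_insert, not_or]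
    exact ⟨by grind [Sym2.eq_iff], hCD⟩

theorem injOn_insert_AB :
    Set.InjOn (insert s(A, B)) (matchingsAvoiding G {a, b, c, d, A, B}) :=
  Set.LeftInvOn.injOn (f₁' := fun N => N.erase s(A, B))
    fun R hR => Finset.erase_insert (notMem_of_mem_matchingsAvoiding hR (by simp) B)

theorem renewWeight_eq_of_mem_edgeSet (hp : UrbanPatch G ω A B C D a b c d w x y z)
    {e : Sym2 V} (he : e ∈ G.edgeSet) : renewWeight ω A B C D w x y z e = ω e := by
  have hne : ∀ {u v}, ¬G.Adj u v → e ≠ s(u, v) := fun h he' => h (by rwa [he'] at he)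
  simp only [renewWeight, if_neg (hne hp.nonadj_AB), if_neg (hne hp.nonadj_AC),
    if_neg (hne hp.nonadj_BD), if_neg (hne hp.nonadj_CD)]

theorem prod_insert_AB (hp : UrbanPatch G ω A B C D a b c d w x y z)
    (hR : R ∈ matchingsAvoiding G {a, b, c, d, A, B}) :
    ∏ e ∈ insert s(A, B) R, renewWeight ω A B C D w x y z e =
      z / (w * z + x * y) * ∏ e ∈ R, ω e := by
  rw [Finset.prod_insert (notMem_of_mem_matchingsAvoiding hR (by simp) B),
    Finset.prod_congr rfl fun e he => hp.renewWeight_eq_of_mem_edgeSet (hR.1.1 e he)]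
  simp [renewWeight]

end UrbanPatch

theorem urban_renewal_case_AB_general {V : Type} (G : SimpleGraph V) (ω : Sym2 V → ℝ)
    (A B C D a b c d : V) (w x y z : ℝ)
    (hpatch : UrbanPatch G ω A B C D a b c d w x y z)
    (hwz : w * z + x * y ≠ 0) :
    mSumP G Set.univ ω
        (fun M => s(a, A) ∈ M ∧ s(b, B) ∈ M ∧ s(c, C) ∉ M ∧ s(d, D) ∉ M)
      = (w * z + x * y) *
        mSumP (renewGraph G A B C D a b c d) (Set.univ \ {a, b, c, d})
          (renewWeight ω A B C D w x y z)
          (fun M => s(A, B) ∈ M ∧ s(C, D) ∉ M) := by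
  rw [mSumP, mSumP, hpatch.matchings_aA_bB_eq_image, hpatch.renewed_matchings_AB_eq_image,
    finsum_mem_image hpatch.injOn_insert_aA_bB_cd, finsum_mem_image UrbanPatch.injOn_insert_AB,
    mul_finsum_mem]
  refine finsum_mem_congr rfl fun R hR => ?_
  rw [hpatch.prod_insert_aA_bB_cd hR, hpatch.prod_insert_AB hR, ← mul_assoc,
    mul_div_cancel₀ z hwz]

/-- The total weight of the perfect matchings of `G` that contain the pendant edges
`aA` and `bB` but contain neither `cC` nor `dD` equals `(wz + xy)` times the total
weight of the perfect matchings of the urban-renewed graph `G'` that contain the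
edge `AB` but not the edge `CD`. -/
theorem urban_renewal_case_AB {V : Type} [Fintype V] (G : SimpleGraph V) (ω : Sym2 V → ℝ)
    (A B C D a b c d : V) (w x y z : ℝ)
    (hnonneg : ∀ e ∈ G.edgeSet, 0 ≤ ω e)
    (hpatch : UrbanPatch G ω A B C D a b c d w x y z)
    (hwz : w * z + x * y ≠ 0) :
    mSumP G Set.univ ω
        (fun M => s(a, A) ∈ M ∧ s(b, B) ∈ M ∧ s(c, C) ∉ M ∧ s(d, D) ∉ M)
      = (w * z + x * y) *
        mSumP (renewGraph G A B C D a b c d) (Set.univ \ {a, b, c, d})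
          (renewWeight ω A B C D w x y z)
          (fun M => s(A, B) ∈ M ∧ s(C, D) ∉ M) :=
  urban_renewal_case_AB_general G ω A B C D a b c d w x y z hpatch hwz
end

section
/- Let G be a finite graph with nonnegative real edge weights containing an urban-renewal patch with weights w, x, y, z satisfying wz + xy ≠ 0, and let G' be the urban-renewed graph. Then the total weight of the perfect matchings of G that contain all four pendant edges aA, bB, cC, dD equals (wz + xy) times the total weight of the perfect matchings of G' that contain either both of the edges AB and CD, or both of the edges AC and BD. -/
open scoped Classical

/-!
Removing the pendant edges `aA, bB, cC, dD` is a weight-preserving bijection from the perfect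
matchings of `G` that contain them onto the perfect matchings of `G - {A, B, C, D, a, b, c, d}`.
Likewise, removing `AB, CD` (or `AC, BD`) maps the corresponding matchings of `G'` onto the
matchings of the same graph, as `G` and `G'` coincide away from the patch; these two families
are disjoint since `A` is matched only once. So the left side is `M(G - patch)` and the right
side is `(wz + xy) (zw + yx) / (wz + xy)² · M(G - patch)`.
-/

section Matchings

variable {V : Type} {H : SimpleGraph V} {S : Set V} {E M N : Finset (Sym2 V)}

def edgeVertices (E : Finset (Sym2 V)) : Set V := {v | ∃ e ∈ E, v ∈ e}

def EdgesDisjoint (E : Finset (Sym2 V)) : Prop :=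
  ∀ e₁ ∈ E, ∀ e₂ ∈ E, ∀ v ∈ e₁, v ∈ e₂ → e₁ = e₂

/-- `M(H[T])`: a perfect matching of the induced subgraph `H[T]` is encoded as a perfect
matching of `H` relative to `T` whose edges stay inside `T`. -/
noncomputable def mSumInduced (H : SimpleGraph V) (T : Set V) (ω : Sym2 V → ℝ) : ℝ :=
  mSumP H T ω fun M => ∀ e ∈ M, ∀ v ∈ e, v ∈ T

theorem edgeVertices_pair (P Q R T : V) :
    edgeVertices {s(P, Q), s(R, T)} = {P, Q, R, T} := by
  ext v
  simp only [edgeVertices, Finset.mem_insert, Finset.mem_singleton, exists_eq_or_imp,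
    exists_eq_left, Sym2.mem_iff, Set.mem_ofPred_eq, Set.mem_insert_iff, Set.mem_singleton_iff,
    or_assoc]

theorem edgesDisjoint_pair {P Q R T : V} (h : Disjoint ({P, Q} : Set V) {R, T}) :
    EdgesDisjoint {s(P, Q), s(R, T)} := by
  simp only [Set.disjoint_insert_left, Set.disjoint_singleton_left, Set.mem_insert_iff,
    Set.mem_singleton_iff, not_or] at h
  simp only [EdgesDisjoint, Finset.mem_insert, Finset.mem_singleton, forall_eq_or_imp,
    forall_eq, Sym2.mem_iff]
  grind

theorem IsPM.union_of_disjoint (hM : IsPM H (S \ edgeVertices E) M)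
    (hMS : ∀ e ∈ M, ∀ v ∈ e, v ∈ S \ edgeVertices E)
    (hEH : ∀ e ∈ E, e ∈ H.edgeSet) (hE : EdgesDisjoint E) : IsPM H S (M ∪ E) := by
  refine ⟨fun e he => (Finset.mem_union.1 he).elim (hM.1 e) (hEH e), fun v hv => ?_⟩
  by_cases hvE : v ∈ edgeVertices E
  · obtain ⟨e₀, he₀, hve₀⟩ := hvE
    refine ⟨e₀, ⟨Finset.mem_union_right _ he₀, hve₀⟩, fun e ⟨he, hve⟩ => ?_⟩
    rcases Finset.mem_union.1 he with heM | heE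
    · exact absurd ⟨e₀, he₀, hve₀⟩ (hMS e heM v hve).2
    · exact hE e heE e₀ he₀ v hve hve₀
  · obtain ⟨e₀, ⟨he₀, hve₀⟩, huniq⟩ := hM.2 v ⟨hv, hvE⟩
    refine ⟨e₀, ⟨Finset.mem_union_left _ he₀, hve₀⟩, fun e ⟨he, hve⟩ => ?_⟩
    rcases Finset.mem_union.1 he with heM | heE
    · exact huniq e ⟨heM, hve⟩
    · exact absurd ⟨e, heE, hve⟩ hvE

theorem IsPM.sdiff_of_subset (hN : IsPM H S N) (hEN : E ⊆ N)
    (hHS : ∀ e ∈ H.edgeSet, ∀ v ∈ e, v ∈ S) :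
    IsPM H (S \ edgeVertices E) (N \ E) ∧
      ∀ e ∈ N \ E, ∀ v ∈ e, v ∈ S \ edgeVertices E := by
  have hNS : ∀ e ∈ N, ∀ v ∈ e, v ∈ S := fun e he => hHS e (hN.1 e he)
  have hout : ∀ e ∈ N \ E, ∀ v ∈ e, v ∉ edgeVertices E := by
    rintro e he v hve ⟨e', he', hve'⟩
    obtain ⟨heN, heE⟩ := Finset.mem_sdiff.1 he
    exact heE ((hN.2 v (hNS e heN v hve)).unique ⟨heN, hve⟩ ⟨hEN he', hve'⟩ ▸ he')
  refine ⟨⟨fun e he => hN.1 e (Finset.mem_sdiff.1 he).1, fun v hv => ?_⟩,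
    fun e he v hve => ⟨hNS e (Finset.mem_sdiff.1 he).1 v hve, hout e he v hve⟩⟩
  obtain ⟨e₀, ⟨he₀, hve₀⟩, huniq⟩ := hN.2 v hv.1
  exact ⟨e₀, ⟨Finset.mem_sdiff.2 ⟨he₀, fun h => hv.2 ⟨e₀, h, hve₀⟩⟩, hve₀⟩,
    fun e ⟨he, hve⟩ => huniq e ⟨(Finset.mem_sdiff.1 he).1, hve⟩⟩

theorem mSumP_superset_eq_mul [Finite V] (ω : Sym2 V → ℝ) (hEH : ∀ e ∈ E, e ∈ H.edgeSet)
    (hE : EdgesDisjoint E) (hHS : ∀ e ∈ H.edgeSet, ∀ v ∈ e, v ∈ S) :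
    mSumP H S ω (E ⊆ ·) = (∏ e ∈ E, ω e) * mSumInduced H (S \ edgeVertices E) ω := by
  have hdisj : ∀ M : Finset (Sym2 V), (∀ e ∈ M, ∀ v ∈ e, v ∈ S \ edgeVertices E) →
      Disjoint M E := by
    refine fun M hMS => Finset.disjoint_left.2 fun e heM heE => ?_
    exact (hMS e heM _ (Sym2.out_fst_mem e)).2 ⟨e, heE, Sym2.out_fst_mem e⟩
  rw [mSumInduced, mSumP, mSumP, mul_finsum_mem]
  symm
  refine finsum_mem_eq_of_bijOn (· ∪ E) ⟨?_, ?_, ?_⟩ fun M ⟨_, hMS⟩ => ?_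
  · exact fun M ⟨hM, hMS⟩ => ⟨hM.union_of_disjoint hMS hEH hE, Finset.subset_union_right⟩
  · intro M ⟨_, hMS⟩ M' ⟨_, hMS'⟩ h
    simp only at h
    rw [← Finset.union_sdiff_cancel_right (hdisj M hMS), h,
      Finset.union_sdiff_cancel_right (hdisj M' hMS')]
  · intro N ⟨hN, hEN⟩
    exact ⟨N \ E, hN.sdiff_of_subset hEN hHS, Finset.sdiff_union_of_subset hEN⟩
  · rw [Finset.prod_union (hdisj M hMS), mul_comm]

theorem mSumP_or [Finite V] {ω : Sym2 V → ℝ} {P Q : Finset (Sym2 V) → Prop}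
    (hPQ : ∀ M, IsPM H S M → P M → Q M → False) :
    mSumP H S ω (fun M => P M ∨ Q M) = mSumP H S ω P + mSumP H S ω Q := by
  rw [mSumP, mSumP, mSumP, ← finsum_mem_union (Set.disjoint_left.2 ?_) (Set.toFinite _)
    (Set.toFinite _)]
  · congr 1
    ext M
    simp only [Set.mem_ofPred_eq, Set.mem_union, and_or_left]
  · exact fun M ⟨hM, hP⟩ ⟨_, hQ⟩ => hPQ M hM hP hQ

theorem mSumInduced_congr {H' : SimpleGraph V} {T : Set V} {ω ω' : Sym2 V → ℝ}
    (hadj : ∀ u ∈ T, ∀ v ∈ T, H.Adj u v ↔ H'.Adj u v)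
    (hω : ∀ e : Sym2 V, (∀ v ∈ e, v ∈ T) → ω e = ω' e) :
    mSumInduced H T ω = mSumInduced H' T ω' := by
  have hedge : ∀ e : Sym2 V, (∀ v ∈ e, v ∈ T) →
      (e ∈ H.edgeSet ↔ e ∈ H'.edgeSet) := by
    refine Sym2.ind fun u v huv => ?_
    exact hadj u (huv u (Sym2.mem_mk_left u v)) v (huv v (Sym2.mem_mk_right u v))
  refine finsum_mem_congr ?_ fun M hM => Finset.prod_congr rfl fun e he => hω e (hM.2 e he)
  ext M
  exact and_congr_left fun hMT => and_congr_left' (forall₂_congr fun e he => hedge e (hMT e he))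

end Matchings

section UrbanRenewal

variable {V : Type} {G : SimpleGraph V} {ω : Sym2 V → ℝ} {A B C D a b c d : V} {w x y z : ℝ}

theorem renewGraph_adj_iff_of_mem_compl {u v : V}
    (hu : u ∈ ({A, B, C, D, a, b, c, d} : Set V)ᶜ)
    (hv : v ∈ ({A, B, C, D, a, b, c, d} : Set V)ᶜ) :
    (renewGraph G A B C D a b c d).Adj u v ↔ G.Adj u v := by
  simp only [Set.mem_compl_iff, Set.mem_insert_iff, Set.mem_singleton_iff, not_or] at hu hv
  simp only [renewGraph, SimpleGraph.fromRel_adj, Set.mem_insert_iff, Set.mem_singleton_iff,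
    G.adj_comm v u]
  grind [G.ne_of_adj]

theorem renewWeight_of_not_mem {e : Sym2 V} (hA : A ∉ e) (hD : D ∉ e) :
    renewWeight ω A B C D w x y z e = ω e := by
  have hAB : e ≠ s(A, B) := by rintro rfl; exact hA (Sym2.mem_mk_left A B)
  have hAC : e ≠ s(A, C) := by rintro rfl; exact hA (Sym2.mem_mk_left A C)
  have hBD : e ≠ s(B, D) := by rintro rfl; exact hD (Sym2.mem_mk_right B D)
  have hCD : e ≠ s(C, D) := by rintro rfl; exact hD (Sym2.mem_mk_right C D)
  simp only [renewWeight, if_neg hAB, if_neg hAC, if_neg hBD, if_neg hCD]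

namespace UrbanPatch

variable (hp : UrbanPatch G ω A B C D a b c d w x y z)
include hp

theorem mSumP_pendant [Finite V] :
    mSumP G Set.univ ω
        (fun M => s(a, A) ∈ M ∧ s(b, B) ∈ M ∧ s(c, C) ∈ M ∧ s(d, D) ∈ M) =
      mSumInduced G ({A, B, C, D, a, b, c, d} : Set V)ᶜ ω := by
  have := hp.distinct
  have hpred : (fun M : Finset (Sym2 V) =>
      s(a, A) ∈ M ∧ s(b, B) ∈ M ∧ s(c, C) ∈ M ∧ s(d, D) ∈ M) =
      ({s(a, A), s(b, B), s(c, C), s(d, D)} ⊆ ·) := by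
    ext M
    simp only [Finset.insert_subset_iff, Finset.singleton_subset_iff]
  have hE :
      edgeVertices {s(a, A), s(b, B), s(c, C), s(d, D)} = {A, B, C, D, a, b, c, d} := by
    ext v
    simp only [edgeVertices, Finset.mem_insert, Finset.mem_singleton, exists_eq_or_imp,
      exists_eq_left, Sym2.mem_iff, Set.mem_ofPred_eq, Set.mem_insert_iff, Set.mem_singleton_iff]
    tauto
  have hEH :
      ∀ e ∈ ({s(a, A), s(b, B), s(c, C), s(d, D)} : Finset (Sym2 V)), e ∈ G.edgeSet := by
    simp only [Finset.mem_insert, Finset.mem_singleton, forall_eq_or_imp, forall_eq,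
      SimpleGraph.mem_edgeSet, hp.adj_a, hp.adj_b, hp.adj_c, hp.adj_d]
    tauto
  have hdisj : EdgesDisjoint ({s(a, A), s(b, B), s(c, C), s(d, D)} : Finset (Sym2 V)) := by
    simp only [EdgesDisjoint, Finset.mem_insert, Finset.mem_singleton, forall_eq_or_imp,
      forall_eq, Sym2.mem_iff]
    grind [List.pairwise_cons]
  have hw : ∀ e ∈ ({s(a, A), s(b, B), s(c, C), s(d, D)} : Finset (Sym2 V)), ω e = 1 := by
    simp only [Finset.mem_insert, Finset.mem_singleton, forall_eq_or_imp, forall_eq]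
    exact ⟨hp.wt_aA, hp.wt_bB, hp.wt_cC, hp.wt_dD⟩
  rw [hpred, mSumP_superset_eq_mul ω hEH hdisj fun _ _ _ _ => Set.mem_univ _,
    Finset.prod_eq_one hw, one_mul, hE, Set.compl_eq_univ_sdiff]

theorem mem_of_mem_renewGraph_edgeSet :
    ∀ e ∈ (renewGraph G A B C D a b c d).edgeSet, ∀ v ∈ e,
      v ∈ Set.univ \ {a, b, c, d} := by
  have := hp.distinct
  refine Sym2.ind fun u u' he v hv => ?_
  simp only [SimpleGraph.mem_edgeSet, renewGraph, SimpleGraph.fromRel_adj, Set.mem_insert_iff,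
    Set.mem_singleton_iff] at he
  simp only [Sym2.mem_iff] at hv
  simp only [Set.mem_sdiff, Set.mem_univ, Set.mem_insert_iff, Set.mem_singleton_iff, true_and]
  grind [List.pairwise_cons]

theorem mSumP_renew_pair [Finite V] {P Q R T : V}
    (hPQ : (renewGraph G A B C D a b c d).Adj P Q) (hRT : (renewGraph G A B C D a b c d).Adj R T)
    (hdisj : Disjoint ({P, Q} : Set V) {R, T}) (hcover : ({P, Q, R, T} : Set V) = {A, B, C, D}) :
    mSumP (renewGraph G A B C D a b c d) (Set.univ \ {a, b, c, d}) (renewWeight ω A B C D w x y z)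
        (fun M => s(P, Q) ∈ M ∧ s(R, T) ∈ M) =
      renewWeight ω A B C D w x y z s(P, Q) * renewWeight ω A B C D w x y z s(R, T) *
        mSumInduced G ({A, B, C, D, a, b, c, d} : Set V)ᶜ ω := by
  have hpred : (fun M : Finset (Sym2 V) => s(P, Q) ∈ M ∧ s(R, T) ∈ M) =
      ({s(P, Q), s(R, T)} ⊆ ·) := by
    ext M
    simp only [Finset.insert_subset_iff, Finset.singleton_subset_iff]
  have hne : s(P, Q) ≠ s(R, T) := by
    intro h
    have hP : P ∈ s(R, T) := h ▸ Sym2.mem_mk_left P Q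
    exact Set.disjoint_left.1 hdisj (Set.mem_insert P _) (by simpa [Sym2.mem_iff] using hP)
  have hT : (Set.univ \ {a, b, c, d} : Set V) \ edgeVertices {s(P, Q), s(R, T)} =
      ({A, B, C, D, a, b, c, d} : Set V)ᶜ := by
    ext v
    simp only [edgeVertices_pair, hcover, Set.mem_sdiff, Set.mem_univ, Set.mem_insert_iff,
      Set.mem_singleton_iff, Set.mem_compl_iff]
    tauto
  have hEH : ∀ e ∈ ({s(P, Q), s(R, T)} : Finset (Sym2 V)),
      e ∈ (renewGraph G A B C D a b c d).edgeSet := by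
    simpa only [Finset.mem_insert, Finset.mem_singleton, forall_eq_or_imp, forall_eq]
      using ⟨hPQ, hRT⟩
  rw [hpred, mSumP_superset_eq_mul _ hEH (edgesDisjoint_pair hdisj)
    hp.mem_of_mem_renewGraph_edgeSet, Finset.prod_pair hne, hT]
  refine congrArg _ (mSumInduced_congr (fun u hu v hv => renewGraph_adj_iff_of_mem_compl hu hv)
    fun e he => renewWeight_of_not_mem (fun hA => ?_) fun hD => ?_)
  · exact he A hA (by simp)
  · exact he D hD (by simp)

theorem mSumP_renew_AB_CD [Finite V] :
    mSumP (renewGraph G A B C D a b c d) (Set.univ \ {a, b, c, d}) (renewWeight ω A B C D w x y z)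
        (fun M => s(A, B) ∈ M ∧ s(C, D) ∈ M) =
      z / (w * z + x * y) * (w / (w * z + x * y)) *
        mSumInduced G ({A, B, C, D, a, b, c, d} : Set V)ᶜ ω := by
  have := hp.distinct
  rw [hp.mSumP_renew_pair ?hAB ?hCD ?hdisj rfl]
  case hAB | hCD =>
    simp only [renewGraph, SimpleGraph.fromRel_adj]
    grind [List.pairwise_cons]
  case hdisj =>
    simp only [Set.disjoint_insert_left, Set.disjoint_singleton_left, Set.mem_insert_iff,
      Set.mem_singleton_iff]
    grind [List.pairwise_cons]
  simp only [renewWeight]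
  grind [List.pairwise_cons]

theorem mSumP_renew_AC_BD [Finite V] :
    mSumP (renewGraph G A B C D a b c d) (Set.univ \ {a, b, c, d}) (renewWeight ω A B C D w x y z)
        (fun M => s(A, C) ∈ M ∧ s(B, D) ∈ M) =
      y / (w * z + x * y) * (x / (w * z + x * y)) *
        mSumInduced G ({A, B, C, D, a, b, c, d} : Set V)ᶜ ω := by
  have := hp.distinct
  rw [hp.mSumP_renew_pair ?hAC ?hBD ?hdisj (congrArg (insert A) (Set.insert_comm C B {D}))]
  case hAC | hBD =>
    simp only [renewGraph, SimpleGraph.fromRel_adj]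
    grind [List.pairwise_cons]
  case hdisj =>
    simp only [Set.disjoint_insert_left, Set.disjoint_singleton_left, Set.mem_insert_iff,
      Set.mem_singleton_iff]
    grind [List.pairwise_cons]
  simp only [renewWeight]
  grind [List.pairwise_cons]

theorem false_of_AB_mem_of_AC_mem {M : Finset (Sym2 V)}
    (hM : IsPM (renewGraph G A B C D a b c d) (Set.univ \ {a, b, c, d}) M)
    (hAB : s(A, B) ∈ M) (hAC : s(A, C) ∈ M) : False := by
  have := hp.distinct
  have hA : A ∈ Set.univ \ ({a, b, c, d} : Set V) := by
    simp only [Set.mem_sdiff, Set.mem_univ, Set.mem_insert_iff, Set.mem_singleton_iff, true_and]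
    grind [List.pairwise_cons]
  have h := (hM.2 A hA).unique ⟨hAB, Sym2.mem_mk_left A B⟩ ⟨hAC, Sym2.mem_mk_left A C⟩
  grind [List.pairwise_cons]

end UrbanPatch

end UrbanRenewal

theorem urban_renewal_case_ABCD_general {V : Type} [Fintype V] (G : SimpleGraph V) (ω : Sym2 V → ℝ)
    (A B C D a b c d : V) (w x y z : ℝ)
    (hpatch : UrbanPatch G ω A B C D a b c d w x y z)
    (hwz : w * z + x * y ≠ 0) :
    mSumP G Set.univ ω
        (fun M => s(a, A) ∈ M ∧ s(b, B) ∈ M ∧ s(c, C) ∈ M ∧ s(d, D) ∈ M)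
      = (w * z + x * y) *
        mSumP (renewGraph G A B C D a b c d) (Set.univ \ {a, b, c, d})
          (renewWeight ω A B C D w x y z)
          (fun M => (s(A, B) ∈ M ∧ s(C, D) ∈ M) ∨ (s(A, C) ∈ M ∧ s(B, D) ∈ M)) := by
  rw [hpatch.mSumP_pendant,
    mSumP_or fun M hM hABCD hACBD => hpatch.false_of_AB_mem_of_AC_mem hM hABCD.1 hACBD.1,
    hpatch.mSumP_renew_AB_CD, hpatch.mSumP_renew_AC_BD]
  field_simp

/-- The total weight of the perfect matchings of `G` that contain all four pendant
edges `aA, bB, cC, dD` equals `(wz + xy)` times the total weight of the perfect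
matchings of the urban-renewed graph `G'` that contain either both of the edges
`AB` and `CD`, or both of the edges `AC` and `BD`. -/
theorem urban_renewal_case_ABCD {V : Type} [Fintype V] (G : SimpleGraph V) (ω : Sym2 V → ℝ)
    (A B C D a b c d : V) (w x y z : ℝ)
    (hnonneg : ∀ e ∈ G.edgeSet, 0 ≤ ω e)
    (hpatch : UrbanPatch G ω A B C D a b c d w x y z)
    (hwz : w * z + x * y ≠ 0) :
    mSumP G Set.univ ω
        (fun M => s(a, A) ∈ M ∧ s(b, B) ∈ M ∧ s(c, C) ∈ M ∧ s(d, D) ∈ M)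
      = (w * z + x * y) *
        mSumP (renewGraph G A B C D a b c d) (Set.univ \ {a, b, c, d})
          (renewWeight ω A B C D w x y z)
          (fun M => (s(A, B) ∈ M ∧ s(C, D) ∈ M) ∨ (s(A, C) ∈ M ∧ s(B, D) ∈ M)) :=
  urban_renewal_case_ABCD_general G ω A B C D a b c d w x y z hpatch hwz
end

section
/- Let G be a finite graph with nonnegative real edge weights containing an urban-renewal patch with weights w, x, y, z satisfying wz + xy ≠ 0, and let G' be the urban-renewed graph. Then the total weight of the perfect matchings of G that contain none of the pendant edges aA, bB, cC, dD equals (wz + xy) times the total weight of the perfect matchings of G' that contain none of the edges AB, AC, BD, CD. -/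
open scoped Classical

/-- The total weight of the perfect matchings of `G` that contain none of the
pendant edges `aA, bB, cC, dD` equals `(wz + xy)` times the total weight of the
perfect matchings of the urban-renewed graph `G'` that contain none of the edges
`AB, AC, BD, CD`. -/
theorem urban_renewal_case_empty {V : Type} [Fintype V] (G : SimpleGraph V) (ω : Sym2 V → ℝ)
    (A B C D a b c d : V) (w x y z : ℝ)
    (hnonneg : ∀ e ∈ G.edgeSet, 0 ≤ ω e)
    (hpatch : UrbanPatch G ω A B C D a b c d w x y z)
    (hwz : w * z + x * y ≠ 0) :
    mSumP G Set.univ ω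
        (fun M => s(a, A) ∉ M ∧ s(b, B) ∉ M ∧ s(c, C) ∉ M ∧ s(d, D) ∉ M)
      = (w * z + x * y) *
        mSumP (renewGraph G A B C D a b c d) (Set.univ \ {a, b, c, d})
          (renewWeight ω A B C D w x y z)
          (fun M => s(A, B) ∉ M ∧ s(A, C) ∉ M ∧ s(B, D) ∉ M ∧ s(C, D) ∉ M) := by
  classical
  obtain ⟨hd, adja, adjb, adjc, adjd, wab, wac, wbd, wcd, waA, wbB, wcC, wdD,
    nAB, nAC, nAD, nBC, nBD, nCD⟩ := hpatch
  simp only [List.pairwise_cons, List.mem_cons, List.not_mem_nil, or_false,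
    List.mem_singleton, forall_eq_or_imp, forall_eq, List.Pairwise.nil, and_true] at hd
  obtain ⟨⟨hAB, hAC, hAD, hAa, hAb, hAc, hAd⟩, ⟨hBC, hBD, hBa, hBb, hBc, hBd⟩,
    ⟨hCD, hCa, hCb, hCc, hCd⟩, ⟨hDa, hDb, hDc, hDd⟩, ⟨hab, hac, had⟩, ⟨hbc, hbd⟩, ⟨hcd, -⟩⟩ := hd
  set G' := renewGraph G A B C D a b c d with hG'
  set ω' := renewWeight ω A B C D w x y z with hω'
  set K : Set (Finset (Sym2 V)) := {M | IsPM G' (Set.univ \ {a, b, c, d}) M ∧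
      (s(A, B) ∉ M ∧ s(A, C) ∉ M ∧ s(B, D) ∉ M ∧ s(C, D) ∉ M)} with hK
  set L : Set (Finset (Sym2 V)) := {M | IsPM G Set.univ M ∧
      (s(a, A) ∉ M ∧ s(b, B) ∉ M ∧ s(c, C) ∉ M ∧ s(d, D) ∉ M)} with hLdef
  have hGab : s(a, b) ∈ G.edgeSet := (SimpleGraph.mem_edgeSet _).2 ((adja b).2 (Or.inl rfl))
  have hGac : s(a, c) ∈ G.edgeSet := (SimpleGraph.mem_edgeSet _).2 ((adja c).2 (Or.inr (Or.inl rfl)))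
  have hGbd : s(b, d) ∈ G.edgeSet := (SimpleGraph.mem_edgeSet _).2 ((adjb d).2 (Or.inr (Or.inl rfl)))
  have hGcd : s(c, d) ∈ G.edgeSet := (SimpleGraph.mem_edgeSet _).2 ((adjc d).2 (Or.inr (Or.inl rfl)))
  have kedge : ∀ M0 ∈ K, ∀ e ∈ M0, e ∈ G.edgeSet ∧ a ∉ e ∧ b ∉ e ∧ c ∉ e ∧ d ∉ e := by
    rintro M0 ⟨⟨hedge, -⟩, hPAB, hPAC, hPBD, hPCD⟩ e he
    have h1 := hedge e he
    induction e using Sym2.ind with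
    | _ u v =>
      rw [SimpleGraph.mem_edgeSet, hG', renewGraph, SimpleGraph.fromRel_adj] at h1
      rcases h1 with ⟨huv, (⟨hadj, hu, hv⟩ | ⟨rfl, rfl⟩ | ⟨rfl, rfl⟩ | ⟨rfl, rfl⟩ | ⟨rfl, rfl⟩) |
        (⟨hadj, hv, hu⟩ | ⟨rfl, rfl⟩ | ⟨rfl, rfl⟩ | ⟨rfl, rfl⟩ | ⟨rfl, rfl⟩)⟩
      · simp only [Set.mem_insert_iff, Set.mem_singleton_iff, not_or] at hu hv
        refine ⟨(SimpleGraph.mem_edgeSet _).2 hadj, ?_, ?_, ?_, ?_⟩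
        · rw [Sym2.mem_iff, not_or]
          exact ⟨fun h => hu.1 h.symm, fun h => hv.1 h.symm⟩
        · rw [Sym2.mem_iff, not_or]
          exact ⟨fun h => hu.2.1 h.symm, fun h => hv.2.1 h.symm⟩
        · rw [Sym2.mem_iff, not_or]
          exact ⟨fun h => hu.2.2.1 h.symm, fun h => hv.2.2.1 h.symm⟩
        · rw [Sym2.mem_iff, not_or]
          exact ⟨fun h => hu.2.2.2 h.symm, fun h => hv.2.2.2 h.symm⟩
      · exact absurd he hPAB
      · exact absurd he hPAC
      · exact absurd he hPBD
      · exact absurd he hPCD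
      · simp only [Set.mem_insert_iff, Set.mem_singleton_iff, not_or] at hu hv
        refine ⟨(SimpleGraph.mem_edgeSet _).2 hadj.symm, ?_, ?_, ?_, ?_⟩
        · rw [Sym2.mem_iff, not_or]
          exact ⟨fun h => hu.1 h.symm, fun h => hv.1 h.symm⟩
        · rw [Sym2.mem_iff, not_or]
          exact ⟨fun h => hu.2.1 h.symm, fun h => hv.2.1 h.symm⟩
        · rw [Sym2.mem_iff, not_or]
          exact ⟨fun h => hu.2.2.1 h.symm, fun h => hv.2.2.1 h.symm⟩
        · rw [Sym2.mem_iff, not_or]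
          exact ⟨fun h => hu.2.2.2 h.symm, fun h => hv.2.2.2 h.symm⟩
      · rw [Sym2.eq_swap] at he; exact absurd he hPAB
      · rw [Sym2.eq_swap] at he; exact absurd he hPAC
      · rw [Sym2.eq_swap] at he; exact absurd he hPBD
      · rw [Sym2.eq_swap] at he; exact absurd he hPCD
  have key_a : ∀ M ∈ L, ∀ e ∈ M, a ∈ e → e = s(a, b) ∨ e = s(a, c) := by
    rintro M ⟨⟨hedge, -⟩, hPa, hPb, hPc, hPd⟩ e he hae
    induction e using Sym2.ind with
    | _ u v =>
      have hadj := (SimpleGraph.mem_edgeSet _).1 (hedge _ he)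
      rcases Sym2.mem_iff.1 hae with rfl | rfl
      · rcases (adja v).1 hadj with rfl | rfl | rfl
        · exact Or.inl rfl
        · exact Or.inr rfl
        · exact absurd he hPa
      · rcases (adja u).1 hadj.symm with rfl | rfl | rfl
        · exact Or.inl Sym2.eq_swap
        · exact Or.inr Sym2.eq_swap
        · rw [Sym2.eq_swap] at he; exact absurd he hPa
  have key_b : ∀ M ∈ L, ∀ e ∈ M, b ∈ e → e = s(a, b) ∨ e = s(b, d) := by
    rintro M ⟨⟨hedge, -⟩, hPa, hPb, hPc, hPd⟩ e he hbe
    induction e using Sym2.ind with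
    | _ u v =>
      have hadj := (SimpleGraph.mem_edgeSet _).1 (hedge _ he)
      rcases Sym2.mem_iff.1 hbe with rfl | rfl
      · rcases (adjb v).1 hadj with rfl | rfl | rfl
        · exact Or.inl Sym2.eq_swap
        · exact Or.inr rfl
        · exact absurd he hPb
      · rcases (adjb u).1 hadj.symm with rfl | rfl | rfl
        · exact Or.inl rfl
        · exact Or.inr Sym2.eq_swap
        · rw [Sym2.eq_swap] at he; exact absurd he hPb
  have key_c : ∀ M ∈ L, ∀ e ∈ M, c ∈ e → e = s(a, c) ∨ e = s(c, d) := by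
    rintro M ⟨⟨hedge, -⟩, hPa, hPb, hPc, hPd⟩ e he hce
    induction e using Sym2.ind with
    | _ u v =>
      have hadj := (SimpleGraph.mem_edgeSet _).1 (hedge _ he)
      rcases Sym2.mem_iff.1 hce with rfl | rfl
      · rcases (adjc v).1 hadj with rfl | rfl | rfl
        · exact Or.inl Sym2.eq_swap
        · exact Or.inr rfl
        · exact absurd he hPc
      · rcases (adjc u).1 hadj.symm with rfl | rfl | rfl
        · exact Or.inl rfl
        · exact Or.inr Sym2.eq_swap
        · rw [Sym2.eq_swap] at he; exact absurd he hPc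
  have key_d : ∀ M ∈ L, ∀ e ∈ M, d ∈ e → e = s(b, d) ∨ e = s(c, d) := by
    rintro M ⟨⟨hedge, -⟩, hPa, hPb, hPc, hPd⟩ e he hde
    induction e using Sym2.ind with
    | _ u v =>
      have hadj := (SimpleGraph.mem_edgeSet _).1 (hedge _ he)
      rcases Sym2.mem_iff.1 hde with rfl | rfl
      · rcases (adjd v).1 hadj with rfl | rfl | rfl
        · exact Or.inl Sym2.eq_swap
        · exact Or.inr Sym2.eq_swap
        · exact absurd he hPd
      · rcases (adjd u).1 hadj.symm with rfl | rfl | rfl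
        · exact Or.inl rfl
        · exact Or.inr rfl
        · rw [Sym2.eq_swap] at he; exact absurd he hPd
  have mkM0 : ∀ M ∈ L, ∀ e1 e2 : Sym2 V, e1 ∈ M → e2 ∈ M →
      (∀ v ∈ e1, v = a ∨ v = b ∨ v = c ∨ v = d) →
      (∀ v ∈ e2, v = a ∨ v = b ∨ v = c ∨ v = d) →
      (∀ e ∈ M, ¬(a ∈ e ∨ b ∈ e ∨ c ∈ e ∨ d ∈ e) ∨ e = e1 ∨ e = e2) →
      (M \ {e1, e2} ∈ K ∧ M = insert e1 (insert e2 (M \ {e1, e2}))) := by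
    rintro M ⟨⟨hedge, hcov⟩, hPa, hPb, hPc, hPd⟩ e1 e2 he1 he2 hinner1 hinner2 htouch
    constructor
    · refine ⟨⟨?_, ?_⟩, ?_, ?_, ?_, ?_⟩
      · intro e he
        rw [Finset.mem_sdiff, Finset.mem_insert, Finset.mem_singleton, not_or] at he
        obtain ⟨heM, hne1, hne2⟩ := he
        have hnt : ¬(a ∈ e ∨ b ∈ e ∨ c ∈ e ∨ d ∈ e) := by
          rcases htouch e heM with h | h | h
          · exact h
          · exact absurd h hne1
          · exact absurd h hne2
        rw [not_or, not_or, not_or] at hnt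
        obtain ⟨hna, hnb, hnc, hnd⟩ := hnt
        have hEG := hedge e heM
        induction e using Sym2.ind with
        | _ u v =>
          simp only [Sym2.mem_iff, not_or] at hna hnb hnc hnd
          rw [SimpleGraph.mem_edgeSet] at hEG
          rw [SimpleGraph.mem_edgeSet, hG', renewGraph, SimpleGraph.fromRel_adj]
          refine ⟨hEG.ne, Or.inl (Or.inl ⟨hEG, ?_, ?_⟩)⟩
          · simp only [Set.mem_insert_iff, Set.mem_singleton_iff, not_or]
            exact ⟨fun h => hna.1 h.symm, fun h => hnb.1 h.symm,
              fun h => hnc.1 h.symm, fun h => hnd.1 h.symm⟩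
          · simp only [Set.mem_insert_iff, Set.mem_singleton_iff, not_or]
            exact ⟨fun h => hna.2 h.symm, fun h => hnb.2 h.symm,
              fun h => hnc.2 h.symm, fun h => hnd.2 h.symm⟩
      · intro v hv
        rw [Set.mem_diff] at hv
        simp only [Set.mem_insert_iff, Set.mem_singleton_iff, not_or] at hv
        obtain ⟨-, hva, hvb, hvc, hvd⟩ := hv
        obtain ⟨e, ⟨heM, hve⟩, huniq⟩ := hcov v (Set.mem_univ v)
        have hne1 : e ≠ e1 := by
          rintro rfl
          rcases hinner1 v hve with h | h | h | h
          exacts [hva h, hvb h, hvc h, hvd h]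
        have hne2 : e ≠ e2 := by
          rintro rfl
          rcases hinner2 v hve with h | h | h | h
          exacts [hva h, hvb h, hvc h, hvd h]
        refine ⟨e, ⟨?_, hve⟩, ?_⟩
        · rw [Finset.mem_sdiff, Finset.mem_insert, Finset.mem_singleton]
          exact ⟨heM, by tauto⟩
        · rintro e' ⟨he', hve'⟩
          rw [Finset.mem_sdiff] at he'
          exact huniq e' ⟨he'.1, hve'⟩
      · intro h
        rw [Finset.mem_sdiff] at h
        exact nAB ((SimpleGraph.mem_edgeSet _).1 (hedge _ h.1))
      · intro h
        rw [Finset.mem_sdiff] at h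
        exact nAC ((SimpleGraph.mem_edgeSet _).1 (hedge _ h.1))
      · intro h
        rw [Finset.mem_sdiff] at h
        exact nBD ((SimpleGraph.mem_edgeSet _).1 (hedge _ h.1))
      · intro h
        rw [Finset.mem_sdiff] at h
        exact nCD ((SimpleGraph.mem_edgeSet _).1 (hedge _ h.1))
    · ext e
      simp only [Finset.mem_insert, Finset.mem_sdiff, Finset.mem_singleton, not_or]
      constructor
      · intro he
        by_cases h1 : e = e1
        · exact Or.inl h1
        · by_cases h2 : e = e2
          · exact Or.inr (Or.inl h2)
          · exact Or.inr (Or.inr ⟨he, h1, h2⟩)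
      · rintro (rfl | rfl | ⟨he, -, -⟩)
        exacts [he1, he2, he]
  have mem1 : ∀ M0 ∈ K, insert s(a, b) (insert s(c, d) M0) ∈ L := by
    intro M0 hM0
    have havoid := kedge M0 hM0
    obtain ⟨⟨hedge0, hcov0⟩, hP0⟩ := hM0
    refine ⟨⟨?_, ?_⟩, ?_, ?_, ?_, ?_⟩
    · intro e he
      rcases Finset.mem_insert.1 he with rfl | he
      · exact hGab
      rcases Finset.mem_insert.1 he with rfl | he
      · exact hGcd
      · exact (havoid e he).1
    · rintro v -
      by_cases hva : v = a
      · refine ⟨s(a, b), ⟨Finset.mem_insert_self _ _,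
          by rw [hva]; exact Sym2.mem_mk_left _ _⟩, ?_⟩
        rintro e ⟨he, hve⟩
        rw [hva] at hve
        rcases Finset.mem_insert.1 he with rfl | he
        · rfl
        rcases Finset.mem_insert.1 he with rfl | he
        · rcases Sym2.mem_iff.1 hve with h | h
          exacts [absurd h hac, absurd h had]
        · exact absurd hve (havoid e he).2.1
      by_cases hvb : v = b
      · refine ⟨s(a, b), ⟨Finset.mem_insert_self _ _,
          by rw [hvb]; exact Sym2.mem_mk_right _ _⟩, ?_⟩
        rintro e ⟨he, hve⟩
        rw [hvb] at hve
        rcases Finset.mem_insert.1 he with rfl | he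
        · rfl
        rcases Finset.mem_insert.1 he with rfl | he
        · rcases Sym2.mem_iff.1 hve with h | h
          exacts [absurd h hbc, absurd h hbd]
        · exact absurd hve (havoid e he).2.2.1
      by_cases hvc : v = c
      · refine ⟨s(c, d), ⟨Finset.mem_insert_of_mem (Finset.mem_insert_self _ _),
          (by rw [hvc]; exact Sym2.mem_mk_left _ _)⟩, ?_⟩
        rintro e ⟨he, hve⟩
        rw [hvc] at hve
        rcases Finset.mem_insert.1 he with rfl | he
        · rcases Sym2.mem_iff.1 hve with h | h
          exacts [absurd h.symm hac, absurd h.symm hbc]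
        rcases Finset.mem_insert.1 he with rfl | he
        · rfl
        · exact absurd hve (havoid e he).2.2.2.1
      by_cases hvd : v = d
      · refine ⟨s(c, d), ⟨Finset.mem_insert_of_mem (Finset.mem_insert_self _ _),
          (by rw [hvd]; exact Sym2.mem_mk_right _ _)⟩, ?_⟩
        rintro e ⟨he, hve⟩
        rw [hvd] at hve
        rcases Finset.mem_insert.1 he with rfl | he
        · rcases Sym2.mem_iff.1 hve with h | h
          exacts [absurd h.symm had, absurd h.symm hbd]
        rcases Finset.mem_insert.1 he with rfl | he
        · rfl
        · exact absurd hve (havoid e he).2.2.2.2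
      · obtain ⟨e, ⟨heM0, hve⟩, huniq⟩ := hcov0 v (by
          simp only [Set.mem_diff, Set.mem_univ, true_and, Set.mem_insert_iff,
            Set.mem_singleton_iff, not_or]
          exact ⟨hva, hvb, hvc, hvd⟩)
        refine ⟨e, ⟨Finset.mem_insert_of_mem (Finset.mem_insert_of_mem heM0), hve⟩, ?_⟩
        rintro e' ⟨he', hve'⟩
        rcases Finset.mem_insert.1 he' with rfl | he'
        · rcases Sym2.mem_iff.1 hve' with h | h
          exacts [absurd h hva, absurd h hvb]
        rcases Finset.mem_insert.1 he' with rfl | he'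
        · rcases Sym2.mem_iff.1 hve' with h | h
          exacts [absurd h hvc, absurd h hvd]
        · exact huniq e' ⟨he', hve'⟩
    · simp only [Finset.mem_insert, not_or]
      refine ⟨?_, ?_, fun h => (havoid _ h).2.1 (Sym2.mem_mk_left _ _)⟩
      · rw [Sym2.eq_iff]; push_neg
        exact ⟨fun _ => hAb, fun h => absurd h hab⟩
      · rw [Sym2.eq_iff]; push_neg
        exact ⟨fun h => absurd h hac, fun h => absurd h had⟩
    · simp only [Finset.mem_insert, not_or]
      refine ⟨?_, ?_, fun h => (havoid _ h).2.2.1 (Sym2.mem_mk_left _ _)⟩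
      · rw [Sym2.eq_iff]; push_neg
        exact ⟨fun h => absurd h.symm hab, fun _ => hBa⟩
      · rw [Sym2.eq_iff]; push_neg
        exact ⟨fun h => absurd h hbc, fun h => absurd h hbd⟩
    · simp only [Finset.mem_insert, not_or]
      refine ⟨?_, ?_, fun h => (havoid _ h).2.2.2.1 (Sym2.mem_mk_left _ _)⟩
      · rw [Sym2.eq_iff]; push_neg
        exact ⟨fun h => absurd h.symm hac, fun h => absurd h.symm hbc⟩
      · rw [Sym2.eq_iff]; push_neg
        exact ⟨fun _ => hCd, fun h => absurd h hcd⟩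
    · simp only [Finset.mem_insert, not_or]
      refine ⟨?_, ?_, fun h => (havoid _ h).2.2.2.2 (Sym2.mem_mk_left _ _)⟩
      · rw [Sym2.eq_iff]; push_neg
        exact ⟨fun h => absurd h.symm had, fun h => absurd h.symm hbd⟩
      · rw [Sym2.eq_iff]; push_neg
        exact ⟨fun h => absurd h.symm hcd, fun _ => hDc⟩
  have mem2 : ∀ M0 ∈ K, insert s(a, c) (insert s(b, d) M0) ∈ L := by
    intro M0 hM0
    have havoid := kedge M0 hM0
    obtain ⟨⟨hedge0, hcov0⟩, hP0⟩ := hM0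
    refine ⟨⟨?_, ?_⟩, ?_, ?_, ?_, ?_⟩
    · intro e he
      rcases Finset.mem_insert.1 he with rfl | he
      · exact hGac
      rcases Finset.mem_insert.1 he with rfl | he
      · exact hGbd
      · exact (havoid e he).1
    · rintro v -
      by_cases hva : v = a
      · refine ⟨s(a, c), ⟨Finset.mem_insert_self _ _,
          (by rw [hva]; exact Sym2.mem_mk_left _ _)⟩, ?_⟩
        rintro e ⟨he, hve⟩
        rw [hva] at hve
        rcases Finset.mem_insert.1 he with rfl | he
        · rfl
        rcases Finset.mem_insert.1 he with rfl | he
        · rcases Sym2.mem_iff.1 hve with h | h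
          exacts [absurd h hab, absurd h had]
        · exact absurd hve (havoid e he).2.1
      by_cases hvc : v = c
      · refine ⟨s(a, c), ⟨Finset.mem_insert_self _ _,
          by rw [hvc]; exact Sym2.mem_mk_right _ _⟩, ?_⟩
        rintro e ⟨he, hve⟩
        rw [hvc] at hve
        rcases Finset.mem_insert.1 he with rfl | he
        · rfl
        rcases Finset.mem_insert.1 he with rfl | he
        · rcases Sym2.mem_iff.1 hve with h | h
          exacts [absurd h.symm hbc, absurd h hcd]
        · exact absurd hve (havoid e he).2.2.2.1
      by_cases hvb : v = b
      · refine ⟨s(b, d), ⟨Finset.mem_insert_of_mem (Finset.mem_insert_self _ _),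
          (by rw [hvb]; exact Sym2.mem_mk_left _ _)⟩, ?_⟩
        rintro e ⟨he, hve⟩
        rw [hvb] at hve
        rcases Finset.mem_insert.1 he with rfl | he
        · rcases Sym2.mem_iff.1 hve with h | h
          exacts [absurd h.symm hab, absurd h hbc]
        rcases Finset.mem_insert.1 he with rfl | he
        · rfl
        · exact absurd hve (havoid e he).2.2.1
      by_cases hvd : v = d
      · refine ⟨s(b, d), ⟨Finset.mem_insert_of_mem (Finset.mem_insert_self _ _),
          (by rw [hvd]; exact Sym2.mem_mk_right _ _)⟩, ?_⟩
        rintro e ⟨he, hve⟩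
        rw [hvd] at hve
        rcases Finset.mem_insert.1 he with rfl | he
        · rcases Sym2.mem_iff.1 hve with h | h
          exacts [absurd h.symm had, absurd h.symm hcd]
        rcases Finset.mem_insert.1 he with rfl | he
        · rfl
        · exact absurd hve (havoid e he).2.2.2.2
      · obtain ⟨e, ⟨heM0, hve⟩, huniq⟩ := hcov0 v (by
          simp only [Set.mem_diff, Set.mem_univ, true_and, Set.mem_insert_iff,
            Set.mem_singleton_iff, not_or]
          exact ⟨hva, hvb, hvc, hvd⟩)
        refine ⟨e, ⟨Finset.mem_insert_of_mem (Finset.mem_insert_of_mem heM0), hve⟩, ?_⟩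
        rintro e' ⟨he', hve'⟩
        rcases Finset.mem_insert.1 he' with rfl | he'
        · rcases Sym2.mem_iff.1 hve' with h | h
          exacts [absurd h hva, absurd h hvc]
        rcases Finset.mem_insert.1 he' with rfl | he'
        · rcases Sym2.mem_iff.1 hve' with h | h
          exacts [absurd h hvb, absurd h hvd]
        · exact huniq e' ⟨he', hve'⟩
    · simp only [Finset.mem_insert, not_or]
      refine ⟨?_, ?_, fun h => (havoid _ h).2.1 (Sym2.mem_mk_left _ _)⟩
      · rw [Sym2.eq_iff]; push_neg
        exact ⟨fun _ => hAc, fun h => absurd h hac⟩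
      · rw [Sym2.eq_iff]; push_neg
        exact ⟨fun h => absurd h hab, fun h => absurd h had⟩
    · simp only [Finset.mem_insert, not_or]
      refine ⟨?_, ?_, fun h => (havoid _ h).2.2.1 (Sym2.mem_mk_left _ _)⟩
      · rw [Sym2.eq_iff]; push_neg
        exact ⟨fun h => absurd h.symm hab, fun h => absurd h hbc⟩
      · rw [Sym2.eq_iff]; push_neg
        exact ⟨fun _ => hBd, fun h => absurd h hbd⟩
    · simp only [Finset.mem_insert, not_or]
      refine ⟨?_, ?_, fun h => (havoid _ h).2.2.2.1 (Sym2.mem_mk_left _ _)⟩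
      · rw [Sym2.eq_iff]; push_neg
        exact ⟨fun h => absurd h.symm hac, fun _ => hCa⟩
      · rw [Sym2.eq_iff]; push_neg
        exact ⟨fun h => absurd h.symm hbc, fun h => absurd h hcd⟩
    · simp only [Finset.mem_insert, not_or]
      refine ⟨?_, ?_, fun h => (havoid _ h).2.2.2.2 (Sym2.mem_mk_left _ _)⟩
      · rw [Sym2.eq_iff]; push_neg
        exact ⟨fun h => absurd h.symm had, fun h => absurd h.symm hcd⟩
      · rw [Sym2.eq_iff]; push_neg
        exact ⟨fun h => absurd h.symm hbd, fun _ => hDb⟩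
  have hLeq : L = (fun M0 => insert s(a, b) (insert s(c, d) M0)) '' K ∪
      (fun M0 => insert s(a, c) (insert s(b, d) M0)) '' K := by
    apply Set.eq_of_subset_of_subset
    · intro M hML
      have hML' : M ∈ L := hML
      obtain ⟨⟨hedge, hcov⟩, hPa, hPb, hPc, hPd⟩ := hML
      obtain ⟨ea, ⟨heaM, haea⟩, huniqa⟩ := hcov a (Set.mem_univ a)
      rcases key_a M hML' ea heaM haea with rfl | rfl
      · obtain ⟨ed, ⟨hedM, hded⟩, huniqd⟩ := hcov d (Set.mem_univ d)
        have hcdM : s(c, d) ∈ M := by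
          rcases key_d M hML' ed hedM hded with rfl | rfl
          · exfalso
            obtain ⟨eb, -, huniqb⟩ := hcov b (Set.mem_univ b)
            have h1 := huniqb s(a, b) ⟨heaM, Sym2.mem_mk_right _ _⟩
            have h2 := huniqb s(b, d) ⟨hedM, Sym2.mem_mk_left _ _⟩
            rw [← h2] at h1
            rcases Sym2.eq_iff.1 h1 with ⟨h, -⟩ | ⟨h, -⟩
            exacts [hab h, had h]
          · exact hedM
        have hnac : s(a, c) ∉ M := by
          intro h
          have h1 := huniqa s(a, c) ⟨h, Sym2.mem_mk_left _ _⟩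
          rcases Sym2.eq_iff.1 h1 with ⟨-, h'⟩ | ⟨h', -⟩
          exacts [hbc h'.symm, hab h']
        have hnbd : s(b, d) ∉ M := by
          intro h
          have h1 := huniqd s(b, d) ⟨h, Sym2.mem_mk_right _ _⟩
          rw [← huniqd s(c, d) ⟨hcdM, Sym2.mem_mk_right _ _⟩] at h1
          rcases Sym2.eq_iff.1 h1 with ⟨h', -⟩ | ⟨h', -⟩
          exacts [hbc h', hbd h']
        have htouch : ∀ e ∈ M, ¬(a ∈ e ∨ b ∈ e ∨ c ∈ e ∨ d ∈ e) ∨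
            e = s(a, b) ∨ e = s(c, d) := by
          intro e he
          by_cases ht : a ∈ e ∨ b ∈ e ∨ c ∈ e ∨ d ∈ e
          · rcases ht with h | h | h | h
            · rcases key_a M hML' e he h with rfl | rfl
              · exact Or.inr (Or.inl rfl)
              · exact absurd he hnac
            · rcases key_b M hML' e he h with rfl | rfl
              · exact Or.inr (Or.inl rfl)
              · exact absurd he hnbd
            · rcases key_c M hML' e he h with rfl | rfl
              · exact absurd he hnac
              · exact Or.inr (Or.inr rfl)
            · rcases key_d M hML' e he h with rfl | rfl
              · exact absurd he hnbd
              · exact Or.inr (Or.inr rfl)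
          · exact Or.inl ht
        obtain ⟨hKmem, hMeq⟩ := mkM0 M hML' s(a, b) s(c, d) heaM hcdM
          (by
            intro v hv
            rcases Sym2.mem_iff.1 hv with rfl | rfl
            · exact Or.inl rfl
            · exact Or.inr (Or.inl rfl))
          (by
            intro v hv
            rcases Sym2.mem_iff.1 hv with rfl | rfl
            · exact Or.inr (Or.inr (Or.inl rfl))
            · exact Or.inr (Or.inr (Or.inr rfl)))
          htouch
        exact Or.inl ⟨M \ {s(a, b), s(c, d)}, hKmem, hMeq.symm⟩
      · obtain ⟨ed, ⟨hedM, hded⟩, huniqd⟩ := hcov d (Set.mem_univ d)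
        have hbdM : s(b, d) ∈ M := by
          rcases key_d M hML' ed hedM hded with rfl | rfl
          · exact hedM
          · exfalso
            obtain ⟨ec, -, huniqc⟩ := hcov c (Set.mem_univ c)
            have h1 := huniqc s(a, c) ⟨heaM, Sym2.mem_mk_right _ _⟩
            have h2 := huniqc s(c, d) ⟨hedM, Sym2.mem_mk_left _ _⟩
            rw [← h2] at h1
            rcases Sym2.eq_iff.1 h1 with ⟨h, -⟩ | ⟨h, -⟩
            exacts [hac h, had h]
        have hnab : s(a, b) ∉ M := by
          intro h
          have h1 := huniqa s(a, b) ⟨h, Sym2.mem_mk_left _ _⟩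
          rcases Sym2.eq_iff.1 h1 with ⟨-, h'⟩ | ⟨h', -⟩
          exacts [hbc h', hac h']
        have hncd : s(c, d) ∉ M := by
          intro h
          have h1 := huniqd s(c, d) ⟨h, Sym2.mem_mk_right _ _⟩
          rw [← huniqd s(b, d) ⟨hbdM, Sym2.mem_mk_right _ _⟩] at h1
          rcases Sym2.eq_iff.1 h1 with ⟨h', -⟩ | ⟨h', -⟩
          exacts [hbc h'.symm, hcd h']
        have htouch : ∀ e ∈ M, ¬(a ∈ e ∨ b ∈ e ∨ c ∈ e ∨ d ∈ e) ∨
            e = s(a, c) ∨ e = s(b, d) := by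
          intro e he
          by_cases ht : a ∈ e ∨ b ∈ e ∨ c ∈ e ∨ d ∈ e
          · rcases ht with h | h | h | h
            · rcases key_a M hML' e he h with rfl | rfl
              · exact absurd he hnab
              · exact Or.inr (Or.inl rfl)
            · rcases key_b M hML' e he h with rfl | rfl
              · exact absurd he hnab
              · exact Or.inr (Or.inr rfl)
            · rcases key_c M hML' e he h with rfl | rfl
              · exact Or.inr (Or.inl rfl)
              · exact absurd he hncd
            · rcases key_d M hML' e he h with rfl | rfl
              · exact Or.inr (Or.inr rfl)
              · exact absurd he hncd
          · exact Or.inl ht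
        obtain ⟨hKmem, hMeq⟩ := mkM0 M hML' s(a, c) s(b, d) heaM hbdM
          (by
            intro v hv
            rcases Sym2.mem_iff.1 hv with rfl | rfl
            · exact Or.inl rfl
            · exact Or.inr (Or.inr (Or.inl rfl)))
          (by
            intro v hv
            rcases Sym2.mem_iff.1 hv with rfl | rfl
            · exact Or.inr (Or.inl rfl)
            · exact Or.inr (Or.inr (Or.inr rfl)))
          htouch
        exact Or.inr ⟨M \ {s(a, c), s(b, d)}, hKmem, hMeq.symm⟩
    · rintro M (⟨M0, hM0, rfl⟩ | ⟨M0, hM0, rfl⟩)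
      · exact mem1 M0 hM0
      · exact mem2 M0 hM0
  have hdisj : Disjoint ((fun M0 => insert s(a, b) (insert s(c, d) M0)) '' K)
      ((fun M0 => insert s(a, c) (insert s(b, d) M0)) '' K) := by
    rw [Set.disjoint_left]
    rintro M ⟨M0, hM0, rfl⟩ ⟨M0', hM0', heq⟩
    have heq' : insert s(a, c) (insert s(b, d) M0') =
        insert s(a, b) (insert s(c, d) M0) := heq
    have hab_mem : s(a, b) ∈ insert s(a, c) (insert s(b, d) M0') := by
      rw [heq']; exact Finset.mem_insert_self _ _
    rcases Finset.mem_insert.1 hab_mem with h | h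
    · rcases Sym2.eq_iff.1 h with ⟨-, h'⟩ | ⟨h', -⟩
      exacts [hbc h', hac h']
    rcases Finset.mem_insert.1 h with h | h
    · rcases Sym2.eq_iff.1 h with ⟨h', -⟩ | ⟨h', -⟩
      exacts [hab h', had h']
    · exact (kedge M0' hM0' _ h).2.1 (Sym2.mem_mk_left _ _)
  have hnotmem1 : ∀ M0 ∈ K, s(a, b) ∉ insert s(c, d) M0 ∧ s(c, d) ∉ M0 := by
    intro M0 hM0
    constructor
    · intro h
      rcases Finset.mem_insert.1 h with h | h
      · rcases Sym2.eq_iff.1 h with ⟨h', -⟩ | ⟨h', -⟩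
        exacts [hac h', had h']
      · exact (kedge M0 hM0 _ h).2.1 (Sym2.mem_mk_left _ _)
    · intro h
      exact (kedge M0 hM0 _ h).2.2.2.1 (Sym2.mem_mk_left _ _)
  have hnotmem2 : ∀ M0 ∈ K, s(a, c) ∉ insert s(b, d) M0 ∧ s(b, d) ∉ M0 := by
    intro M0 hM0
    constructor
    · intro h
      rcases Finset.mem_insert.1 h with h | h
      · rcases Sym2.eq_iff.1 h with ⟨h', -⟩ | ⟨h', -⟩
        exacts [hab h', had h']
      · exact (kedge M0 hM0 _ h).2.1 (Sym2.mem_mk_left _ _)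
    · intro h
      exact (kedge M0 hM0 _ h).2.2.1 (Sym2.mem_mk_left _ _)
  have hinj1 : Set.InjOn (fun M0 => insert s(a, b) (insert s(c, d) M0)) K := by
    intro M0 hM0 M0' hM0' heq0
    have heq : insert s(a, b) (insert s(c, d) M0) =
        insert s(a, b) (insert s(c, d) M0') := heq0
    ext e
    constructor
    · intro he
      have h1 : e ∈ insert s(a, b) (insert s(c, d) M0') := by
        rw [← heq]
        exact Finset.mem_insert_of_mem (Finset.mem_insert_of_mem he)
      rcases Finset.mem_insert.1 h1 with rfl | h1
      · exact absurd (Sym2.mem_mk_left _ _) (kedge M0 hM0 _ he).2.1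
      rcases Finset.mem_insert.1 h1 with rfl | h1
      · exact absurd (Sym2.mem_mk_left _ _) (kedge M0 hM0 _ he).2.2.2.1
      · exact h1
    · intro he
      have h1 : e ∈ insert s(a, b) (insert s(c, d) M0) := by
        rw [heq]
        exact Finset.mem_insert_of_mem (Finset.mem_insert_of_mem he)
      rcases Finset.mem_insert.1 h1 with rfl | h1
      · exact absurd (Sym2.mem_mk_left _ _) (kedge M0' hM0' _ he).2.1
      rcases Finset.mem_insert.1 h1 with rfl | h1
      · exact absurd (Sym2.mem_mk_left _ _) (kedge M0' hM0' _ he).2.2.2.1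
      · exact h1
  have hinj2 : Set.InjOn (fun M0 => insert s(a, c) (insert s(b, d) M0)) K := by
    intro M0 hM0 M0' hM0' heq0
    have heq : insert s(a, c) (insert s(b, d) M0) =
        insert s(a, c) (insert s(b, d) M0') := heq0
    ext e
    constructor
    · intro he
      have h1 : e ∈ insert s(a, c) (insert s(b, d) M0') := by
        rw [← heq]
        exact Finset.mem_insert_of_mem (Finset.mem_insert_of_mem he)
      rcases Finset.mem_insert.1 h1 with rfl | h1
      · exact absurd (Sym2.mem_mk_left _ _) (kedge M0 hM0 _ he).2.1
      rcases Finset.mem_insert.1 h1 with rfl | h1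
      · exact absurd (Sym2.mem_mk_left _ _) (kedge M0 hM0 _ he).2.2.1
      · exact h1
    · intro he
      have h1 : e ∈ insert s(a, c) (insert s(b, d) M0) := by
        rw [heq]
        exact Finset.mem_insert_of_mem (Finset.mem_insert_of_mem he)
      rcases Finset.mem_insert.1 h1 with rfl | h1
      · exact absurd (Sym2.mem_mk_left _ _) (kedge M0' hM0' _ he).2.1
      rcases Finset.mem_insert.1 h1 with rfl | h1
      · exact absurd (Sym2.mem_mk_left _ _) (kedge M0' hM0' _ he).2.2.1
      · exact h1
  have hprod0 : ∀ M0 ∈ K, ∏ e ∈ M0, ω e = ∏ e ∈ M0, ω' e := by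
    rintro M0 ⟨-, hPAB, hPAC, hPBD, hPCD⟩
    refine Finset.prod_congr rfl fun e he => ?_
    rw [hω', renewWeight]
    rw [if_neg (ne_of_mem_of_not_mem he hPAB), if_neg (ne_of_mem_of_not_mem he hPAC),
      if_neg (ne_of_mem_of_not_mem he hPBD), if_neg (ne_of_mem_of_not_mem he hPCD)]
  have hprod1 : ∀ M0 ∈ K, ∏ e ∈ insert s(a, b) (insert s(c, d) M0), ω e
      = w * z * ∏ e ∈ M0, ω' e := by
    intro M0 hM0
    obtain ⟨h1, h2⟩ := hnotmem1 M0 hM0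
    rw [Finset.prod_insert h1, Finset.prod_insert h2, wab, wcd, hprod0 M0 hM0]
    ring
  have hprod2 : ∀ M0 ∈ K, ∏ e ∈ insert s(a, c) (insert s(b, d) M0), ω e
      = x * y * ∏ e ∈ M0, ω' e := by
    intro M0 hM0
    obtain ⟨h1, h2⟩ := hnotmem2 M0 hM0
    rw [Finset.prod_insert h1, Finset.prod_insert h2, wac, wbd, hprod0 M0 hM0]
    ring
  have hLHS : mSumP G Set.univ ω
      (fun M => s(a, A) ∉ M ∧ s(b, B) ∉ M ∧ s(c, C) ∉ M ∧ s(d, D) ∉ M)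
      = ∑ᶠ M ∈ L, ∏ e ∈ M, ω e := by
    rw [hLdef]; rfl
  have hRHS : mSumP G' (Set.univ \ {a, b, c, d}) ω'
      (fun M => s(A, B) ∉ M ∧ s(A, C) ∉ M ∧ s(B, D) ∉ M ∧ s(C, D) ∉ M)
      = ∑ᶠ M ∈ K, ∏ e ∈ M, ω' e := by
    rw [hK]; rfl
  rw [hLHS, hRHS, hLeq,
    finsum_mem_union hdisj (Set.toFinite _) (Set.toFinite _),
    finsum_mem_image hinj1, finsum_mem_image hinj2,
    finsum_mem_eq_finite_toFinset_sum _ (Set.toFinite K),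
    finsum_mem_eq_finite_toFinset_sum _ (Set.toFinite K),
    finsum_mem_eq_finite_toFinset_sum _ (Set.toFinite K),
    Finset.mul_sum, ← Finset.sum_add_distrib]
  refine Finset.sum_congr rfl fun M0 hM0 => ?_
  have hM0K : M0 ∈ K := (Set.Finite.mem_toFinset _).1 hM0
  simp only [hprod1 M0 hM0K, hprod2 M0 hM0K]
  ring
end

section
/- Vertex-splitting lemma: let G be a finite graph with nonnegative real edge weights, let v be a vertex of G, and let the set of edges incident to v be partitioned into two sets E₁ and E₂. Form the graph G' by replacing v with three new vertices v₁, m, v₂, adding edges v₁m and mv₂ each of weight 1, reattaching each edge of E₁ to v₁ and each edge of E₂ to v₂ (keeping all weights), and leaving the rest of G unchanged. Then M(G') = M(G). -/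
open scoped Classical

/-- The graph obtained from `G` by splitting the vertex `v` into three vertices
`v₁ = Sum.inr 0`, `m = Sum.inl v`, `v₂ = Sum.inr 1`: the edges `v₁m` and `mv₂` are
added, each incident edge `vu` of `G` with `P u` is reattached to `v₁`, and each
incident edge `vu` with `¬ P u` is reattached to `v₂`; the rest of `G` is
unchanged (`P` encodes the partition of the edges incident to `v` into two
sets `E₁` and `E₂`). -/
def splitGraph {V : Type} (G : SimpleGraph V) (v : V) (P : V → Prop) :
    SimpleGraph (V ⊕ Fin 2) :=
  SimpleGraph.fromRel fun s t =>
    match s, t with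
    | Sum.inl u, Sum.inl u' => G.Adj u u' ∧ u ≠ v ∧ u' ≠ v
    | Sum.inl u, Sum.inr i =>
        u = v ∨ (i = 0 ∧ G.Adj v u ∧ P u) ∨ (i = 1 ∧ G.Adj v u ∧ ¬ P u)
    | Sum.inr _, _ => False

/-- The edge weights on the split graph: edges between original vertices keep
their weights, the two new edges `v₁m` and `mv₂` get weight `1`, and a
reattached edge `v₁u` or `v₂u` gets the original weight of the edge `vu`. -/
noncomputable def splitWeight {V : Type} (ω : Sym2 V → ℝ) (v : V) :
    Sym2 (V ⊕ Fin 2) → ℝ :=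
  Sym2.lift ⟨fun s t =>
    match s, t with
    | Sum.inl u, Sum.inl u' => ω s(u, u')
    | Sum.inl u, Sum.inr _ => if u = v then 1 else ω s(v, u)
    | Sum.inr _, Sum.inl u => if u = v then 1 else ω s(v, u)
    | Sum.inr _, Sum.inr _ => 0,
   by
    rintro (u | i) (u' | j) <;> simp [Sym2.eq_swap]⟩

namespace VS

variable {V : Type} {G : SimpleGraph V} {v : V} {P : V → Prop}

lemma adj_inl_inl {a b : V} :
    (splitGraph G v P).Adj (Sum.inl a) (Sum.inl b) ↔ G.Adj a b ∧ a ≠ v ∧ b ≠ v := by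
  simp only [splitGraph, SimpleGraph.fromRel_adj]
  constructor
  · rintro ⟨-, h | h⟩
    · exact h
    · exact ⟨h.1.symm, h.2.2, h.2.1⟩
  · rintro h
    exact ⟨by simp [fun h' : a = b => h.1.ne h'], Or.inl h⟩

lemma adj_inl_inr {u : V} {i : Fin 2} :
    (splitGraph G v P).Adj (Sum.inl u) (Sum.inr i) ↔
      u = v ∨ (i = 0 ∧ G.Adj v u ∧ P u) ∨ (i = 1 ∧ G.Adj v u ∧ ¬ P u) := by
  simp [splitGraph, SimpleGraph.fromRel_adj]

lemma adj_inr_inr {i j : Fin 2} : ¬ (splitGraph G v P).Adj (Sum.inr i) (Sum.inr j) := by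
  simp [splitGraph, SimpleGraph.fromRel_adj]

/-- every edge of the split graph containing `inl v` is `s(inl v, inr i)`. -/
lemma edge_at_m {e : Sym2 (V ⊕ Fin 2)} (he : e ∈ (splitGraph G v P).edgeSet)
    (hv : Sum.inl v ∈ e) : ∃ i, e = s(Sum.inl v, Sum.inr i) := by
  induction e with
  | _ x y =>
    rw [Sym2.mem_iff] at hv
    rw [SimpleGraph.mem_edgeSet] at he
    rcases hv with rfl | rfl
    · rcases y with u | i
      · exact absurd he (by simp [adj_inl_inl])
      · exact ⟨i, rfl⟩
    · rcases x with u | i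
      · rw [adj_inl_inl] at he
        exact absurd rfl he.2.2
      · exact ⟨i, Sym2.eq_swap⟩

/-- every edge containing `inr j` is `s(inr j, inl u)` with the stated condition. -/
lemma edge_at_inr {e : Sym2 (V ⊕ Fin 2)} {j : Fin 2} (he : e ∈ (splitGraph G v P).edgeSet)
    (hj : Sum.inr j ∈ e) :
    ∃ u, e = s(Sum.inr j, Sum.inl u) ∧
      (u = v ∨ (j = 0 ∧ G.Adj v u ∧ P u) ∨ (j = 1 ∧ G.Adj v u ∧ ¬ P u)) := by
  induction e with
  | _ x y =>
    rw [Sym2.mem_iff] at hj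
    rw [SimpleGraph.mem_edgeSet] at he
    rcases hj with rfl | rfl
    · rcases y with u | i
      · rw [(splitGraph G v P).adj_comm, adj_inl_inr] at he
        exact ⟨u, rfl, he⟩
      · exact absurd he adj_inr_inr
    · rcases x with u | i
      · rw [adj_inl_inr] at he
        exact ⟨u, Sym2.eq_swap, he⟩
      · exact absurd he adj_inr_inr

/-- every `G`-edge containing `v` is `s(v, u)` with `G.Adj v u`. -/
lemma edge_at_v {e : Sym2 V} (he : e ∈ G.edgeSet) (hv : v ∈ e) :
    ∃ u, e = s(v, u) ∧ G.Adj v u := by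
  obtain ⟨u, rfl⟩ := Sym2.mem_iff_exists.mp hv
  exact ⟨u, rfl, (G.mem_edgeSet).mp he⟩

noncomputable def hset (v : V) (P : V → Prop) (u : V) : Finset (Sym2 (V ⊕ Fin 2)) :=
  if P u then {s(Sum.inr 0, Sum.inl u), s(Sum.inl v, Sum.inr 1)}
  else {s(Sum.inr 1, Sum.inl u), s(Sum.inl v, Sum.inr 0)}

noncomputable def gmap (v : V) (P : V → Prop) : Sym2 V → Finset (Sym2 (V ⊕ Fin 2)) :=
  Sym2.lift ⟨fun a b =>
    if a = v then hset v P b else if b = v then hset v P a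
    else {s(Sum.inl a, Sum.inl b)}, by
      intro a b
      by_cases ha : a = v <;> by_cases hb : b = v <;>
        simp [ha, hb, Sym2.eq_swap]⟩

lemma gmap_mk_v (b : V) : gmap v P s(v, b) = hset v P b := by
  simp [gmap]

lemma gmap_mk_ne {a b : V} (ha : a ≠ v) (hb : b ≠ v) :
    gmap v P s(a, b) = {s(Sum.inl a, Sum.inl b)} := by
  simp [gmap, ha, hb]

noncomputable def collapse (v : V) : V ⊕ Fin 2 → V := Sum.elim id fun _ => v

noncomputable def phi (v : V) (M : Finset (Sym2 (V ⊕ Fin 2))) : Finset (Sym2 V) :=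
  (M.image (Sym2.map (collapse v))).filter fun e => ¬ e.IsDiag

noncomputable def psi (v : V) (P : V → Prop) (M : Finset (Sym2 V)) :
    Finset (Sym2 (V ⊕ Fin 2)) :=
  M.biUnion (gmap v P)

lemma mem_phi {M : Finset (Sym2 (V ⊕ Fin 2))} {e : Sym2 V} :
    e ∈ phi v M ↔ (∃ e' ∈ M, Sym2.map (collapse v) e' = e) ∧ ¬ e.IsDiag := by
  simp [phi]

lemma mem_psi {M : Finset (Sym2 V)} {e : Sym2 (V ⊕ Fin 2)} :
    e ∈ psi v P M ↔ ∃ e' ∈ M, e ∈ gmap v P e' := by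
  simp [psi]

lemma fin2_cases : ∀ k j : Fin 2, k = j ∨ k = 1 - j := by decide

lemma structure_lemma {M : Finset (Sym2 (V ⊕ Fin 2))}
    (hM : IsPM (splitGraph G v P) Set.univ M) :
    ∃ u j, ((j = (0:Fin 2) ∧ P u) ∨ (j = 1 ∧ ¬ P u)) ∧ G.Adj v u ∧
      s(Sum.inr j, Sum.inl u) ∈ M ∧ s(Sum.inl v, Sum.inr (1 - j)) ∈ M ∧
      ∀ e ∈ M, e ≠ s(Sum.inr j, Sum.inl u) → e ≠ s(Sum.inl v, Sum.inr (1 - j)) →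
        ∃ a b, e = s(Sum.inl a, Sum.inl b) ∧ G.Adj a b ∧ a ≠ v ∧ b ≠ v := by
  obtain ⟨em, ⟨hem, hvm⟩, hmu⟩ := hM.2 (Sum.inl v) trivial
  obtain ⟨i₀, hemi⟩ := edge_at_m (hM.1 _ hem) hvm
  subst hemi
  have hji : (1 : Fin 2) - i₀ ≠ i₀ := by
    have : ∀ k : Fin 2, 1 - k ≠ k := by decide
    exact this i₀
  have hsub : (1 : Fin 2) - (1 - i₀) = i₀ := by
    have : ∀ k : Fin 2, 1 - (1 - k) = k := by decide
    exact this i₀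
  obtain ⟨ej, ⟨hej, hjm⟩, hju⟩ := hM.2 (Sum.inr (1 - i₀)) trivial
  obtain ⟨u, rfl, hcond⟩ := edge_at_inr (hM.1 _ hej) hjm
  have huv : u ≠ v := by
    rintro rfl
    have h2 := hmu _ ⟨hej, by simp⟩
    rw [Sym2.eq_iff] at h2
    rcases h2 with ⟨h, -⟩ | ⟨h, -⟩
    · exact absurd h (by simp)
    · exact hji (Sum.inr.inj h)
  rcases hcond with h | hcond
  · exact absurd h huv
  have hadjvu : G.Adj v u := by rcases hcond with ⟨-, h, -⟩ | ⟨-, h, -⟩ <;> exact h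
  refine ⟨u, 1 - i₀, ?_, hadjvu, hej, by rwa [hsub], ?_⟩
  · rcases hcond with ⟨h1, -, h2⟩ | ⟨h1, -, h2⟩
    · exact Or.inl ⟨h1, h2⟩
    · exact Or.inr ⟨h1, h2⟩
  · rw [hsub]
    intro e he hne1 hne2
    have hinl : ∀ z ∈ e, ∃ a, z = Sum.inl a := by
      intro z hz
      rcases z with a | k
      · exact ⟨a, rfl⟩
      · exfalso
        rcases fin2_cases k (1 - i₀) with rfl | hk
        · exact hne1 ((hju e ⟨he, hz⟩).trans (hju _ ⟨hej, by simp⟩).symm)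
        · rw [hsub] at hk
          obtain ⟨ei, -, hiu⟩ := hM.2 (Sum.inr i₀) trivial
          rw [hk] at hz
          exact hne2 ((hiu e ⟨he, hz⟩).trans (hiu _ ⟨hem, by simp⟩).symm)
    induction e with
    | _ x y =>
      obtain ⟨a, rfl⟩ := hinl x (by simp)
      obtain ⟨b, rfl⟩ := hinl y (by simp)
      have hadj := (hM.1 _ he)
      rw [SimpleGraph.mem_edgeSet, adj_inl_inl] at hadj
      exact ⟨a, b, rfl, hadj⟩

lemma phi_isPM {M : Finset (Sym2 (V ⊕ Fin 2))}
    (hM : IsPM (splitGraph G v P) Set.univ M) : IsPM G Set.univ (phi v M) := by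
  obtain ⟨u, j, hPj, hadj, h1, h2, hrest⟩ := structure_lemma hM
  have huv : u ≠ v := hadj.ne'
  have hvu_mem : s(v, u) ∈ phi v M := by
    rw [mem_phi]
    refine ⟨⟨_, h1, by simp [collapse]⟩, ?_⟩
    rw [Sym2.mk_isDiag_iff]
    exact Ne.symm huv
  constructor
  · intro e he
    rw [mem_phi] at he
    obtain ⟨⟨e', he', rfl⟩, hnd⟩ := he
    by_cases hc1 : e' = s(Sum.inr j, Sum.inl u)
    · subst hc1
      simpa [collapse, SimpleGraph.mem_edgeSet] using hadj
    by_cases hc2 : e' = s(Sum.inl v, Sum.inr (1 - j))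
    · subst hc2
      exact absurd (by simp [collapse, Sym2.mk_isDiag_iff]) hnd
    obtain ⟨a, b, rfl, hab, -, -⟩ := hrest e' he' hc1 hc2
    simpa [collapse, SimpleGraph.mem_edgeSet] using hab
  · intro w _
    by_cases hw : w = v
    · subst hw
      refine ⟨s(w, u), ⟨hvu_mem, by simp⟩, ?_⟩
      rintro e ⟨he, hve⟩
      rw [mem_phi] at he
      obtain ⟨⟨e', he', rfl⟩, hnd⟩ := he
      by_cases hc1 : e' = s(Sum.inr j, Sum.inl u)
      · subst hc1; simp [collapse]
      by_cases hc2 : e' = s(Sum.inl w, Sum.inr (1 - j))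
      · subst hc2
        exact absurd (by simp [collapse, Sym2.mk_isDiag_iff]) hnd
      obtain ⟨a, b, rfl, hab, hav, hbv⟩ := hrest e' he' hc1 hc2
      exfalso
      simp only [collapse, Sym2.map_pair_eq, Sum.elim_inl, id_eq, Sym2.mem_iff] at hve
      rcases hve with h | h
      · exact hav h.symm
      · exact hbv h.symm
    · obtain ⟨ew, ⟨hew, hwew⟩, hwu⟩ := hM.2 (Sum.inl w) trivial
      have key : ∀ e ∈ phi v M, w ∈ e → e = Sym2.map (collapse v) ew := by
        intro e he hwe
        rw [mem_phi] at he
        obtain ⟨⟨e', he', rfl⟩, hnd⟩ := he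
        rw [Sym2.mem_map] at hwe
        obtain ⟨x, hx, hfx⟩ := hwe
        rcases x with a | i
        · simp only [collapse, Sum.elim_inl, id_eq] at hfx
          subst hfx
          rw [hwu e' ⟨he', hx⟩]
        · simp only [collapse, Sum.elim_inr] at hfx
          exact absurd hfx.symm hw
      have hmem : Sym2.map (collapse v) ew ∈ phi v M ∧ w ∈ Sym2.map (collapse v) ew := by
        by_cases hc1 : ew = s(Sum.inr j, Sum.inl u)
        · subst hc1
          have hwu' : w = u := by simpa using hwew
          subst hwu'
          refine ⟨?_, by simp [collapse]⟩
          simpa [collapse] using hvu_mem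
        by_cases hc2 : ew = s(Sum.inl v, Sum.inr (1 - j))
        · exfalso
          subst hc2
          have : w = v := by simpa using hwew
          exact hw this
        obtain ⟨a, b, heq, hab, hav, hbv⟩ := hrest ew hew hc1 hc2
        subst heq
        have hwab : w = a ∨ w = b := by simpa using hwew
        constructor
        · rw [mem_phi]
          refine ⟨⟨_, hew, rfl⟩, ?_⟩
          simp only [collapse, Sym2.map_pair_eq, Sum.elim_inl, id_eq, Sym2.mk_isDiag_iff]
          exact hab.ne
        · simp only [collapse, Sym2.map_pair_eq, Sum.elim_inl, id_eq, Sym2.mem_iff]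
          exact hwab
      exact ⟨Sym2.map (collapse v) ew, ⟨hmem.1, hmem.2⟩, fun e he => key e he.1 he.2⟩

lemma psi_phi {M : Finset (Sym2 (V ⊕ Fin 2))}
    (hM : IsPM (splitGraph G v P) Set.univ M) : psi v P (phi v M) = M := by
  obtain ⟨u, j, hPj, hadj, h1, h2, hrest⟩ := structure_lemma hM
  have huv : u ≠ v := hadj.ne'
  have hvu_mem : s(v, u) ∈ phi v M := by
    rw [mem_phi]
    refine ⟨⟨_, h1, by simp [collapse]⟩, ?_⟩
    rw [Sym2.mk_isDiag_iff]
    exact Ne.symm huv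
  have hhset : hset v P u = {s(Sum.inr j, Sum.inl u), s(Sum.inl v, Sum.inr (1 - j))} := by
    rcases hPj with ⟨rfl, hPu⟩ | ⟨rfl, hPu⟩ <;> simp [hset, hPu]
  ext e
  rw [mem_psi]
  constructor
  · rintro ⟨e', he', hee'⟩
    rw [mem_phi] at he'
    obtain ⟨⟨d, hd, rfl⟩, hnd⟩ := he'
    by_cases hc1 : d = s(Sum.inr j, Sum.inl u)
    · subst hc1
      simp only [collapse, Sym2.map_pair_eq, Sum.elim_inl, Sum.elim_inr, id_eq] at hee'
      rw [gmap_mk_v, hhset] at hee'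
      simp only [Finset.mem_insert, Finset.mem_singleton] at hee'
      rcases hee' with rfl | rfl
      · exact h1
      · exact h2
    by_cases hc2 : d = s(Sum.inl v, Sum.inr (1 - j))
    · subst hc2
      exact absurd (by simp [collapse, Sym2.mk_isDiag_iff]) hnd
    obtain ⟨a, b, rfl, hab, hav, hbv⟩ := hrest d hd hc1 hc2
    simp only [collapse, Sym2.map_pair_eq, Sum.elim_inl, id_eq] at hee'
    rw [gmap_mk_ne hav hbv] at hee'
    simp only [Finset.mem_singleton] at hee'
    subst hee'
    exact hd
  · intro he
    by_cases hc1 : e = s(Sum.inr j, Sum.inl u)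
    · subst hc1
      exact ⟨s(v, u), hvu_mem, by rw [gmap_mk_v, hhset]; simp⟩
    by_cases hc2 : e = s(Sum.inl v, Sum.inr (1 - j))
    · subst hc2
      exact ⟨s(v, u), hvu_mem, by rw [gmap_mk_v, hhset]; simp⟩
    obtain ⟨a, b, rfl, hab, hav, hbv⟩ := hrest e he hc1 hc2
    refine ⟨s(a, b), ?_, by rw [gmap_mk_ne hav hbv]; simp⟩
    rw [mem_phi]
    refine ⟨⟨_, he, by simp [collapse]⟩, ?_⟩
    rw [Sym2.mk_isDiag_iff]
    exact hab.ne

lemma edge_rep {e : Sym2 V} (he : e ∈ G.edgeSet) (hv : v ∉ e) :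
    ∃ a b, e = s(a, b) ∧ G.Adj a b ∧ a ≠ v ∧ b ≠ v := by
  induction e with
  | _ x y =>
    rw [Sym2.mem_iff] at hv
    push_neg at hv
    exact ⟨x, y, rfl, (G.mem_edgeSet).mp he, fun h => hv.1 h.symm, fun h => hv.2 h.symm⟩

variable {ω : Sym2 V → ℝ}

lemma sw_inr_inl {u : V} {i : Fin 2} (hu : u ≠ v) :
    splitWeight ω v s(Sum.inr i, Sum.inl u) = ω s(v, u) := by
  simp [splitWeight, hu]

lemma sw_inl_inr {i : Fin 2} : splitWeight ω v s(Sum.inl v, Sum.inr i) = 1 := by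
  simp [splitWeight]

lemma sw_inl_inl {a b : V} : splitWeight ω v s(Sum.inl a, Sum.inl b) = ω s(a, b) := by
  simp [splitWeight]

lemma fin2_sub_ne : ∀ k : Fin 2, (1 : Fin 2) - k ≠ k := by decide

/-- common setup data for a perfect matching of `G`. -/
lemma setup {M : Finset (Sym2 V)} (hM : IsPM G Set.univ M) :
    ∃ u₀ k, u₀ ≠ v ∧ G.Adj v u₀ ∧ s(v, u₀) ∈ M ∧
      ((k = (0 : Fin 2) ∧ P u₀) ∨ (k = 1 ∧ ¬ P u₀)) ∧
      hset v P u₀ = {s(Sum.inr k, Sum.inl u₀), s(Sum.inl v, Sum.inr (1 - k))} ∧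
      (∀ e ∈ M, v ∈ e → e = s(v, u₀)) := by
  obtain ⟨ev, ⟨hev, hvev⟩, hvu⟩ := hM.2 v trivial
  obtain ⟨u₀, rfl, hadj⟩ := edge_at_v (hM.1 _ hev) hvev
  have huniq : ∀ e ∈ M, v ∈ e → e = s(v, u₀) := fun e he hv => hvu e ⟨he, hv⟩
  by_cases hP : P u₀
  · refine ⟨u₀, 0, hadj.ne', hadj, hev, Or.inl ⟨rfl, hP⟩, ?_, huniq⟩
    have h10 : (1 : Fin 2) - 0 = 1 := by decide
    rw [h10]
    simp [hset, hP]
  · refine ⟨u₀, 1, hadj.ne', hadj, hev, Or.inr ⟨rfl, hP⟩, ?_, huniq⟩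
    have h11 : (1 : Fin 2) - 1 = 0 := by decide
    rw [h11]
    simp [hset, hP]

/-- trichotomy for edges of `psi M`. -/
lemma psi_tri {M : Finset (Sym2 V)} {u₀ : V} {k : Fin 2}
    (hM : IsPM G Set.univ M)
    (hhset : hset v P u₀ = {s(Sum.inr k, Sum.inl u₀), s(Sum.inl v, Sum.inr (1 - k))})
    (huniq : ∀ e ∈ M, v ∈ e → e = s(v, u₀)) :
    ∀ e ∈ psi v P M, e = s(Sum.inr k, Sum.inl u₀) ∨ e = s(Sum.inl v, Sum.inr (1 - k)) ∨
      ∃ a b, e = s(Sum.inl a, Sum.inl b) ∧ s(a, b) ∈ M ∧ G.Adj a b ∧ a ≠ v ∧ b ≠ v := by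
  intro e he
  rw [mem_psi] at he
  obtain ⟨e₀, he₀, hee⟩ := he
  by_cases hc : e₀ = s(v, u₀)
  · subst hc
    rw [gmap_mk_v, hhset] at hee
    simp only [Finset.mem_insert, Finset.mem_singleton] at hee
    tauto
  · have hv : v ∉ e₀ := fun hv => hc (huniq e₀ he₀ hv)
    obtain ⟨a, b, rfl, hab, hav, hbv⟩ := edge_rep (hM.1 _ he₀) hv
    rw [gmap_mk_ne hav hbv] at hee
    simp only [Finset.mem_singleton] at hee
    exact Or.inr (Or.inr ⟨a, b, hee, he₀, hab, hav, hbv⟩)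

lemma psi_isPM {M : Finset (Sym2 V)} (hM : IsPM G Set.univ M) :
    IsPM (splitGraph G v P) Set.univ (psi v P M) := by
  obtain ⟨u₀, k, hu₀, hadj, hev, hk, hhset, huniq⟩ := setup (P := P) hM
  have tri := psi_tri hM hhset huniq
  have hAmem : s(Sum.inr k, Sum.inl u₀) ∈ psi v P M :=
    mem_psi.mpr ⟨s(v, u₀), hev, by rw [gmap_mk_v, hhset]; simp⟩
  have hBmem : s(Sum.inl v, Sum.inr (1 - k)) ∈ psi v P M :=
    mem_psi.mpr ⟨s(v, u₀), hev, by rw [gmap_mk_v, hhset]; simp⟩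
  constructor
  · intro e he
    rcases tri e he with rfl | rfl | ⟨a, b, rfl, -, hab, hav, hbv⟩
    · rw [SimpleGraph.mem_edgeSet, (splitGraph G v P).adj_comm, adj_inl_inr]
      rcases hk with ⟨rfl, hPu⟩ | ⟨rfl, hPu⟩
      · exact Or.inr (Or.inl ⟨rfl, hadj, hPu⟩)
      · exact Or.inr (Or.inr ⟨rfl, hadj, hPu⟩)
    · rw [SimpleGraph.mem_edgeSet, adj_inl_inr]
      exact Or.inl rfl
    · rw [SimpleGraph.mem_edgeSet, adj_inl_inl]
      exact ⟨hab, hav, hbv⟩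
  · rintro (w | i) -
    · by_cases hw : w = v
      · subst hw
        refine ⟨_, ⟨hBmem, by simp⟩, ?_⟩
        rintro e ⟨he, hve⟩
        rcases tri e he with rfl | rfl | ⟨a, b, rfl, -, -, hav, hbv⟩
        · exfalso
          simp only [Sym2.mem_iff] at hve
          rcases hve with h | h
          · exact absurd h (by simp)
          · exact hu₀ (Sum.inl.inj h).symm
        · rfl
        · exfalso
          simp only [Sym2.mem_iff] at hve
          rcases hve with h | h
          · exact hav (Sum.inl.inj h).symm
          · exact hbv (Sum.inl.inj h).symm
      · by_cases hwu : w = u₀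
        · subst hwu
          refine ⟨_, ⟨hAmem, by simp⟩, ?_⟩
          rintro e ⟨he, hve⟩
          rcases tri e he with rfl | rfl | ⟨a, b, rfl, hmem, -, hav, hbv⟩
          · rfl
          · exfalso
            simp only [Sym2.mem_iff] at hve
            rcases hve with h | h
            · exact hw (Sum.inl.inj h)
            · exact absurd h (by simp)
          · exfalso
            obtain ⟨eu, -, huu⟩ := hM.2 w trivial
            have hmemu : w ∈ s(a, b) := by
              rw [Sym2.mem_iff]
              simp only [Sym2.mem_iff] at hve
              rcases hve with h | h
              · exact Or.inl (Sum.inl.inj h)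
              · exact Or.inr (Sum.inl.inj h)
            have heq : s(a, b) = s(v, w) :=
              ((huu _ ⟨hmem, hmemu⟩).trans (huu _ ⟨hev, by simp⟩).symm)
            rw [Sym2.eq_iff] at heq
            rcases heq with ⟨h, -⟩ | ⟨-, h⟩
            · exact hav h
            · exact hbv h
        · obtain ⟨ew, ⟨hew, hwew⟩, hwu'⟩ := hM.2 w trivial
          have hne : ew ≠ s(v, u₀) := by
            rintro rfl
            rw [Sym2.mem_iff] at hwew
            rcases hwew with h | h
            · exact hw h
            · exact hwu h
          have hvne : v ∉ ew := fun hv => hne (huniq ew hew hv)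
          obtain ⟨a, b, heab, hab, hav, hbv⟩ := edge_rep (hM.1 _ hew) hvne
          subst heab
          refine ⟨Sym2.map Sum.inl s(a, b), ⟨?_, ?_⟩, ?_⟩
          · rw [mem_psi]
            exact ⟨s(a, b), hew, by rw [gmap_mk_ne hav hbv]; simp⟩
          · simpa using hwew
          · rintro e ⟨he, hve⟩
            rcases tri e he with rfl | rfl | ⟨a', b', rfl, hmem, -, hav', hbv'⟩
            · exfalso
              simp only [Sym2.mem_iff] at hve
              rcases hve with h | h
              · exact absurd h (by simp)
              · exact hwu (Sum.inl.inj h)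
            · exfalso
              simp only [Sym2.mem_iff] at hve
              rcases hve with h | h
              · exact hw (Sum.inl.inj h)
              · exact absurd h (by simp)
            · have hmemw : w ∈ s(a', b') := by
                rw [Sym2.mem_iff]
                simp only [Sym2.mem_iff] at hve
                rcases hve with h | h
                · exact Or.inl (Sum.inl.inj h)
                · exact Or.inr (Sum.inl.inj h)
              have heq : s(a', b') = s(a, b) :=
                ((hwu' _ ⟨hmem, hmemw⟩).trans (hwu' _ ⟨hew, hwew⟩).symm)
              rw [← heq]
              simp
    · rcases fin2_cases i k with rfl | rfl
      · refine ⟨_, ⟨hAmem, by simp⟩, ?_⟩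
        rintro e ⟨he, hve⟩
        rcases tri e he with rfl | rfl | ⟨a, b, rfl, -, -, -, -⟩
        · rfl
        · exfalso
          simp only [Sym2.mem_iff] at hve
          rcases hve with h | h
          · exact absurd h (by simp)
          · exact fin2_sub_ne i (Sum.inr.inj h).symm
        · exfalso
          simp only [Sym2.mem_iff] at hve
          rcases hve with h | h <;> exact absurd h (by simp)
      · refine ⟨_, ⟨hBmem, by simp⟩, ?_⟩
        rintro e ⟨he, hve⟩
        rcases tri e he with rfl | rfl | ⟨a, b, rfl, -, -, -, -⟩
        · exfalso
          simp only [Sym2.mem_iff] at hve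
          rcases hve with h | h
          · exact fin2_sub_ne k (Sum.inr.inj h)
          · exact absurd h (by simp)
        · rfl
        · exfalso
          simp only [Sym2.mem_iff] at hve
          rcases hve with h | h <;> exact absurd h (by simp)

lemma phi_psi {M : Finset (Sym2 V)} (hM : IsPM G Set.univ M) :
    phi v (psi v P M) = M := by
  obtain ⟨u₀, k, hu₀, hadj, hev, hk, hhset, huniq⟩ := setup (P := P) hM
  have tri := psi_tri hM hhset huniq
  have hAmem : s(Sum.inr k, Sum.inl u₀) ∈ psi v P M :=
    mem_psi.mpr ⟨s(v, u₀), hev, by rw [gmap_mk_v, hhset]; simp⟩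
  ext e
  rw [mem_phi]
  constructor
  · rintro ⟨⟨e'', he'', rfl⟩, hnd⟩
    rcases tri e'' he'' with rfl | rfl | ⟨a, b, rfl, hmem, -, -, -⟩
    · simpa [collapse] using hev
    · exact absurd (by simp [collapse, Sym2.mk_isDiag_iff]) hnd
    · simpa [collapse] using hmem
  · intro he
    by_cases hc : e = s(v, u₀)
    · subst hc
      refine ⟨⟨s(Sum.inr k, Sum.inl u₀), hAmem, by simp [collapse]⟩, ?_⟩
      rw [Sym2.mk_isDiag_iff]
      exact Ne.symm hu₀
    · have hv : v ∉ e := fun hv => hc (huniq e he hv)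
      obtain ⟨a, b, rfl, hab, hav, hbv⟩ := edge_rep (hM.1 _ he) hv
      refine ⟨⟨s(Sum.inl a, Sum.inl b),
        mem_psi.mpr ⟨s(a, b), he, by rw [gmap_mk_ne hav hbv]; simp⟩, by simp [collapse]⟩, ?_⟩
      rw [Sym2.mk_isDiag_iff]
      exact hab.ne

lemma prod_psi {M : Finset (Sym2 V)} (hM : IsPM G Set.univ M) :
    ∏ e ∈ psi v P M, splitWeight ω v e = ∏ e ∈ M, ω e := by
  obtain ⟨u₀, k, hu₀, hadj, hev, hk, hhset, huniq⟩ := setup (P := P) hM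
  have hsingle : ∀ e ∈ M, e ≠ s(v, u₀) → ∃ a b, e = s(a, b) ∧ a ≠ v ∧ b ≠ v := by
    intro e he hne
    obtain ⟨a, b, rfl, hab, hav, hbv⟩ := edge_rep (hM.1 _ he) (fun hv => hne (huniq e he hv))
    exact ⟨a, b, rfl, hav, hbv⟩
  rw [psi, Finset.prod_biUnion]
  · refine Finset.prod_congr rfl ?_
    intro e he
    by_cases hc : e = s(v, u₀)
    · subst hc
      rw [gmap_mk_v, hhset]
      rw [Finset.prod_pair (by
        intro h
        rw [Sym2.eq_iff] at h
        rcases h with ⟨h, -⟩ | ⟨h, -⟩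
        · exact absurd h (by simp)
        · exact fin2_sub_ne k (Sum.inr.inj h).symm)]
      rw [sw_inr_inl hu₀, sw_inl_inr, mul_one]
    · obtain ⟨a, b, rfl, hav, hbv⟩ := hsingle e he hc
      rw [gmap_mk_ne hav hbv, Finset.prod_singleton, sw_inl_inl]
  · have key : ∀ x ∈ M, ∀ y ∈ M, x = s(v, u₀) → y ≠ s(v, u₀) →
        Disjoint (gmap v P x) (gmap v P y) := by
      intro x hx y hy hxe hye
      subst hxe
      obtain ⟨a, b, rfl, hav, hbv⟩ := hsingle y hy hye
      rw [gmap_mk_v, hhset, gmap_mk_ne hav hbv, Finset.disjoint_left]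
      intro z hz
      simp only [Finset.mem_insert, Finset.mem_singleton] at hz
      rw [Finset.mem_singleton]
      rcases hz with rfl | rfl
      · intro h
        rw [Sym2.eq_iff] at h
        rcases h with ⟨h, -⟩ | ⟨h, -⟩ <;> exact absurd h (by simp)
      · intro h
        rw [Sym2.eq_iff] at h
        rcases h with ⟨-, h⟩ | ⟨-, h⟩ <;> exact absurd h (by simp)
    intro e₁ h₁ e₂ h₂ hne
    by_cases hc1 : e₁ = s(v, u₀) <;> by_cases hc2 : e₂ = s(v, u₀)
    · exact absurd (hc1.trans hc2.symm) hne
    · exact key e₁ h₁ e₂ h₂ hc1 hc2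
    · exact (key e₂ h₂ e₁ h₁ hc2 hc1).symm
    · obtain ⟨a, b, rfl, hav, hbv⟩ := hsingle e₁ h₁ hc1
      obtain ⟨c, d, rfl, hcv, hdv⟩ := hsingle e₂ h₂ hc2
      show Disjoint (gmap v P s(a, b)) (gmap v P s(c, d))
      rw [gmap_mk_ne hav hbv, gmap_mk_ne hcv hdv, Finset.disjoint_singleton]
      intro h
      apply hne
      rw [Sym2.eq_iff] at h
      rw [Sym2.eq_iff]
      rcases h with ⟨h1, h2⟩ | ⟨h1, h2⟩
      · exact Or.inl ⟨Sum.inl.inj h1, Sum.inl.inj h2⟩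
      · exact Or.inr ⟨Sum.inl.inj h1, Sum.inl.inj h2⟩

end VS

/-- **Vertex-splitting lemma**: splitting a vertex does not change the weighted
sum of perfect matchings: `M(G') = M(G)`. -/
theorem vertex_splitting {V : Type} [Fintype V] (G : SimpleGraph V) (ω : Sym2 V → ℝ)
    (hnonneg : ∀ e ∈ G.edgeSet, 0 ≤ ω e) (v : V) (P : V → Prop) :
    mSum (splitGraph G v P) Set.univ (splitWeight ω v) = mSum G Set.univ ω := by
  unfold mSum
  refine finsum_mem_eq_of_bijOn (VS.phi v) ⟨?_, ?_, ?_⟩ ?_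
  · intro M hM
    exact VS.phi_isPM hM
  · intro M₁ h₁ M₂ h₂ heq
    rw [← VS.psi_phi (P := P) h₁, ← VS.psi_phi (P := P) h₂, heq]
  · intro M hM
    exact ⟨VS.psi v P M, VS.psi_isPM hM, VS.phi_psi hM⟩
  · intro M hM
    conv_lhs => rw [← VS.psi_phi (P := P) hM]
    exact VS.prod_psi (VS.phi_isPM hM)
end

section
/- Iterated reduction formula: let ω_n be a nonnegative real weight function on the edges of A_n, and recursively define ω_{k−1} on A_{k−1} from ω_k on A_k by the Aztec reduction rule ω_{k−1}(e) = ω_k(opp(e)) / D_{ω_k}(c(e)) for k = n, n−1, …, 1, assuming every cell-factor D_{ω_k}(c) encountered is nonzero. Then M(A_n, ω_n) = ∏_{k=1}^{n} ∏_{c a cell of A_k} D_{ω_k}(c); in particular M(A_n, ω_n) is a product of n² + (n−1)² + ⋯ + 2² + 1² cell-factors. -/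
/-!
Induction on `n` from the one-step identity
`M(A_{k+1}, ω) = (∏_{c cell of A_{k+1}} D_ω(c)) · M(A_k, ω')`, `ω'` the reduction of `ω`.

The cells of `A_{k+1}` partition its edges; a vertex of `A_k` lies in two of them and every other
vertex of `A_{k+1}` in one. A matching meets a cell in nothing, one edge, or a pair of opposite
edges. Domino shuffling (slide a lone edge to the opposite side, delete a pair of opposite edges,
put either pair into an empty cell) complements the covered vertices cell by cell, so it maps
perfect matchings of `A_{k+1}` to those of `A_k` and back. Write `1 = (ω(NW)ω(SE) + ω(NE)ω(SW)) / D`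
at every empty cell of a matching of `A_{k+1}` and `D = ω(NW)ω(SE) + ω(NE)ω(SW)` at every empty
cell of a matching of `A_k`, and expand: shuffling matches the terms of the two expansions one to
one, with equal weights cell by cell.
-/

open scoped Classical

/-- The vertex set of the Aztec diamond graph of order `n`. -/
def aztecSet (n : ℕ) : Set (ℤ × ℤ) :=
  {v | Odd (v.1 + v.2) ∧ |v.1| ≤ (n : ℤ) ∧ |v.2| ≤ (n : ℤ)}

/-- The Aztec diamond graph of order `n`, realized as a graph on `ℤ × ℤ`:
two vertices of the diamond are adjacent exactly when their Euclidean
distance is `√2`. -/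
def aztec (n : ℕ) : SimpleGraph (ℤ × ℤ) where
  Adj u v := u ∈ aztecSet n ∧ v ∈ aztecSet n ∧ (u.1 - v.1) ^ 2 + (u.2 - v.2) ^ 2 = 2
  symm := by
    constructor
    rintro u v ⟨hu, hv, h⟩
    exact ⟨hv, hu, by linear_combination h⟩
  loopless := by
    constructor
    rintro u ⟨-, -, h⟩
    simp at h

/-- `(p, q)` is the center of a cell of the Aztec diamond graph of order `n`:
`p ≡ q ≡ n + 1 (mod 2)`, `|p| ≤ n − 1` and `|q| ≤ n − 1`. -/
def IsCellCenter (n : ℕ) (p q : ℤ) : Prop :=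
  (p - ((n : ℤ) + 1)) % 2 = 0 ∧ (q - ((n : ℤ) + 1)) % 2 = 0 ∧
    |p| ≤ (n : ℤ) - 1 ∧ |q| ≤ (n : ℤ) - 1

/-- The NW edge of the cell with center `(p, q)`. -/
def nwEdge (p q : ℤ) : Sym2 (ℤ × ℤ) := s((p, q + 1), (p - 1, q))

/-- The NE edge of the cell with center `(p, q)`. -/
def neEdge (p q : ℤ) : Sym2 (ℤ × ℤ) := s((p, q + 1), (p + 1, q))

/-- The SW edge of the cell with center `(p, q)`. -/
def swEdge (p q : ℤ) : Sym2 (ℤ × ℤ) := s((p - 1, q), (p, q - 1))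

/-- The SE edge of the cell with center `(p, q)`. -/
def seEdge (p q : ℤ) : Sym2 (ℤ × ℤ) := s((p + 1, q), (p, q - 1))

/-- The cell-factor `D_ω` of the cell with center `(p, q)`:
`ω(NW)·ω(SE) + ω(NE)·ω(SW)`. -/
noncomputable def cellFactor (ω : Sym2 (ℤ × ℤ) → ℝ) (p q : ℤ) : ℝ :=
  ω (nwEdge p q) * ω (seEdge p q) + ω (neEdge p q) * ω (swEdge p q)

section CoverCount

open Finset

variable {α : Type} [DecidableEq α]

def coverCount (M : Finset (Sym2 α)) (v : α) : ℕ := #{e ∈ M | v ∈ e}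

lemma existsUnique_mem_iff_coverCount_eq_one {M : Finset (Sym2 α)} {v : α} :
    (∃! e, e ∈ M ∧ v ∈ e) ↔ coverCount M v = 1 := by
  simp only [coverCount, card_eq_one, eq_singleton_iff_unique_mem, mem_filter]
  exact ⟨fun ⟨e, he, hu⟩ => ⟨e, he, fun f hf => hu f hf⟩,
    fun ⟨e, he, hu⟩ => ⟨e, he, fun f hf => hu f hf⟩⟩

lemma isPM_iff_coverCount {G : SimpleGraph α} {S : Set α} {M : Finset (Sym2 α)} :
    IsPM G S M ↔ (∀ e ∈ M, e ∈ G.edgeSet) ∧ ∀ v ∈ S, coverCount M v = 1 := by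
  simp only [IsPM, existsUnique_mem_iff_coverCount_eq_one]

lemma coverCount_eq_zero {M : Finset (Sym2 α)} {v : α} (h : ∀ e ∈ M, v ∉ e) :
    coverCount M v = 0 := by
  simpa [coverCount, filter_eq_empty_iff] using h

@[simp] lemma coverCount_empty (v : α) : coverCount ∅ v = 0 := rfl

lemma coverCount_mono {M N : Finset (Sym2 α)} (h : M ⊆ N) (v : α) :
    coverCount M v ≤ coverCount N v :=
  card_le_card (filter_subset_filter _ h)

lemma one_le_coverCount {M : Finset (Sym2 α)} {e : Sym2 α} {v : α} (he : e ∈ M) (hv : v ∈ e) :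
    1 ≤ coverCount M v :=
  card_pos.2 ⟨e, mem_filter.2 ⟨he, hv⟩⟩

lemma coverCount_singleton (e : Sym2 α) (v : α) :
    coverCount {e} v = if v ∈ e then 1 else 0 := by
  simp only [coverCount, filter_singleton]
  split_ifs <;> rfl

lemma two_le_coverCount {M : Finset (Sym2 α)} {e f : Sym2 α} (he : e ∈ M) (hf : f ∈ M)
    (hef : e ≠ f) {v : α} (hve : v ∈ e) (hvf : v ∈ f) : 2 ≤ coverCount M v := by
  rw [← card_pair hef]
  exact card_le_card (insert_subset (mem_filter.2 ⟨he, hve⟩)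
    (singleton_subset_iff.2 (mem_filter.2 ⟨hf, hvf⟩)))

lemma coverCount_insert {M : Finset (Sym2 α)} {e : Sym2 α} (he : e ∉ M) (v : α) :
    coverCount (insert e M) v = (if v ∈ e then 1 else 0) + coverCount M v := by
  simp only [coverCount, filter_insert]
  split_ifs
  · rw [card_insert_of_notMem fun h => he (mem_filter.1 h).1, add_comm]
  · rw [zero_add]

lemma coverCount_biUnion {ι : Type*} {s : Finset ι} {t : ι → Finset (Sym2 α)}
    (ht : (s : Set ι).PairwiseDisjoint t) (v : α) :
    coverCount (s.biUnion t) v = ∑ i ∈ s, coverCount (t i) v := by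
  rw [coverCount, filter_biUnion, card_biUnion]
  · rfl
  · exact fun i hi j hj hij => disjoint_filter_filter (ht hi hj hij)

lemma coverCount_le_one_of_isPM {G : SimpleGraph α} {S : Set α} {M : Finset (Sym2 α)}
    (hM : IsPM G S M) (hS : ∀ e ∈ G.edgeSet, ∀ v ∈ e, v ∈ S) (v : α) :
    coverCount M v ≤ 1 := by
  by_cases hv : v ∈ S
  · exact ((isPM_iff_coverCount.1 hM).2 v hv).le
  · rw [coverCount_eq_zero fun e he hve => hv (hS e (hM.1 e he) v hve)]
    exact zero_le_one

end CoverCount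

namespace Finset

theorem sum_powerset_filter_prod_ite {ι R : Type*} [CommSemiring R] [DecidableEq ι]
    (s : Finset ι) (p : ι → Prop) [DecidablePred p] (f g h : ι → R) :
    ∑ d ∈ (s.filter p).powerset, ∏ i ∈ s, (if p i then (if i ∈ d then f i else g i) else h i)
      = ∏ i ∈ s, (if p i then f i + g i else h i) := by
  rw [prod_ite, prod_add, sum_mul]
  refine sum_congr rfl fun d hd => ?_
  rw [prod_ite, prod_ite, filter_mem_eq_inter, inter_eq_right.2 (mem_powerset.1 hd),
    ← sdiff_eq_filter]

end Finset

namespace AztecDiamond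

open Finset

def cellEdges (c : ℤ × ℤ) : Finset (Sym2 (ℤ × ℤ)) :=
  {nwEdge c.1 c.2, neEdge c.1 c.2, swEdge c.1 c.2, seEdge c.1 c.2}

def cellVerts (c : ℤ × ℤ) : Finset (ℤ × ℤ) :=
  {(c.1, c.2 + 1), (c.1 - 1, c.2), (c.1 + 1, c.2), (c.1, c.2 - 1)}

def nwsePair (c : ℤ × ℤ) : Finset (Sym2 (ℤ × ℤ)) := {nwEdge c.1 c.2, seEdge c.1 c.2}

def neswPair (c : ℤ × ℤ) : Finset (Sym2 (ℤ × ℤ)) := {neEdge c.1 c.2, swEdge c.1 c.2}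

def reflect (c : ℤ × ℤ) : Sym2 (ℤ × ℤ) → Sym2 (ℤ × ℤ) :=
  Sym2.map fun x => (2 * c.1 - x.1, 2 * c.2 - x.2)

section Cell

variable (c : ℤ × ℤ)

lemma mem_cellEdges {e : Sym2 (ℤ × ℤ)} : e ∈ cellEdges c ↔
    e = nwEdge c.1 c.2 ∨ e = neEdge c.1 c.2 ∨ e = swEdge c.1 c.2 ∨ e = seEdge c.1 c.2 := by
  simp [cellEdges]

@[simp] lemma reflect_nwEdge : reflect c (nwEdge c.1 c.2) = seEdge c.1 c.2 := by
  simp only [reflect, nwEdge, seEdge, Sym2.map_mk, Sym2.eq_swap (a := (c.1 + 1, c.2))]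
  congr 2 <;> ring

@[simp] lemma reflect_seEdge : reflect c (seEdge c.1 c.2) = nwEdge c.1 c.2 := by
  simp only [reflect, nwEdge, seEdge, Sym2.map_mk, Sym2.eq_swap (a := (c.1, c.2 + 1))]
  congr 2 <;> ring

@[simp] lemma reflect_neEdge : reflect c (neEdge c.1 c.2) = swEdge c.1 c.2 := by
  simp only [reflect, neEdge, swEdge, Sym2.map_mk, Sym2.eq_swap (a := (c.1 - 1, c.2))]
  congr 2 <;> ring

@[simp] lemma reflect_swEdge : reflect c (swEdge c.1 c.2) = neEdge c.1 c.2 := by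
  simp only [reflect, neEdge, swEdge, Sym2.map_mk, Sym2.eq_swap (a := (c.1, c.2 + 1))]
  congr 2 <;> ring

lemma reflect_reflect (e : Sym2 (ℤ × ℤ)) : reflect c (reflect c e) = e := by
  induction e using Sym2.ind
  simp [reflect]

lemma indicator_add_indicator_reflect {e : Sym2 (ℤ × ℤ)} (he : e ∈ cellEdges c) (v : ℤ × ℤ) :
    ((if v ∈ e then 1 else 0) + if v ∈ reflect c e then 1 else 0) =
      if v ∈ cellVerts c then 1 else 0 := by
  obtain ⟨x, y⟩ := v
  rcases (mem_cellEdges c).1 he with rfl | rfl | rfl | rfl <;>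
    simp only [reflect_nwEdge, reflect_neEdge, reflect_swEdge, reflect_seEdge] <;>
    simp only [nwEdge, neEdge, swEdge, seEdge, cellVerts, Sym2.mem_iff, mem_insert, mem_singleton,
      Prod.mk.injEq] <;>
    split_ifs <;> omega

lemma mem_cellVerts_of_mem {e : Sym2 (ℤ × ℤ)} (he : e ∈ cellEdges c) {v : ℤ × ℤ} (hv : v ∈ e) :
    v ∈ cellVerts c := by
  by_contra h
  have := indicator_add_indicator_reflect c he v
  simp only [hv, h, if_true, if_false] at this
  omega

lemma mem_reflect_iff {e : Sym2 (ℤ × ℤ)} (he : e ∈ cellEdges c) {v : ℤ × ℤ} :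
    v ∈ reflect c e ↔ v ∈ cellVerts c ∧ v ∉ e := by
  have := indicator_add_indicator_reflect c he v
  by_cases h1 : v ∈ e <;> by_cases h2 : v ∈ reflect c e <;> by_cases h3 : v ∈ cellVerts c <;>
    simp only [h1, h2, h3, if_true, if_false] at this <;> simp_all

lemma reflect_ne {e : Sym2 (ℤ × ℤ)} (he : e ∈ cellEdges c) : reflect c e ≠ e := by
  intro h
  induction e using Sym2.ind with | _ a b =>
  have ha : a ∈ reflect c s(a, b) := by rw [h]; exact Sym2.mem_mk_left a b
  exact ((mem_reflect_iff c he).1 ha).2 (Sym2.mem_mk_left a b)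

lemma reflect_mem_cellEdges {e : Sym2 (ℤ × ℤ)} (he : e ∈ cellEdges c) :
    reflect c e ∈ cellEdges c := by
  rcases (mem_cellEdges c).1 he with rfl | rfl | rfl | rfl <;> simp [cellEdges]

lemma coverCount_pair_reflect {e : Sym2 (ℤ × ℤ)} (he : e ∈ cellEdges c) (v : ℤ × ℤ) :
    coverCount {e, reflect c e} v = if v ∈ cellVerts c then 1 else 0 := by
  rw [coverCount_insert (by simpa using (reflect_ne c he).symm), coverCount_singleton,
    indicator_add_indicator_reflect c he]

lemma not_isDiag_of_mem_cellEdges {e : Sym2 (ℤ × ℤ)} (he : e ∈ cellEdges c) : ¬e.IsDiag := by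
  rcases (mem_cellEdges c).1 he with rfl | rfl | rfl | rfl <;>
    simp [nwEdge, neEdge, swEdge, seEdge]

lemma pair_reflect_eq {e : Sym2 (ℤ × ℤ)} (he : e ∈ cellEdges c) :
    ({e, reflect c e} : Finset _) = nwsePair c ∨ {e, reflect c e} = neswPair c := by
  rcases (mem_cellEdges c).1 he with rfl | rfl | rfl | rfl <;>
    simp [nwsePair, neswPair, pair_comm]

variable {c} {s : Finset (Sym2 (ℤ × ℤ))}

/-- In a cell, the only edge disjoint from `e` is the opposite edge. -/
lemma subset_pair_reflect (hs : s ⊆ cellEdges c) (hcov : ∀ v, coverCount s v ≤ 1)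
    {e : Sym2 (ℤ × ℤ)} (he : e ∈ s) : s ⊆ {e, reflect c e} := by
  intro f hf
  rw [mem_insert, mem_singleton, or_iff_not_imp_left]
  intro hfe
  have hvf : ∀ v ∈ f, v ∈ reflect c e := fun v hv =>
    (mem_reflect_iff c (hs he)).2 ⟨mem_cellVerts_of_mem c (hs hf) hv,
      fun hve => by have := two_le_coverCount hf he hfe hv hve; linarith [hcov v]⟩
  induction f using Sym2.ind with | _ a b =>
  have hab : a ≠ b := fun h => not_isDiag_of_mem_cellEdges c (hs hf) (h ▸ Sym2.mk_isDiag_iff.2 rfl)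
  exact ((Sym2.mem_and_mem_iff hab).1 ⟨hvf a (Sym2.mem_mk_left a b),
    hvf b (Sym2.mem_mk_right a b)⟩).symm

lemma eq_empty_or_singleton_or_pair (hs : s ⊆ cellEdges c) (hcov : ∀ v, coverCount s v ≤ 1) :
    s = ∅ ∨ (∃ e ∈ cellEdges c, s = {e}) ∨ s = nwsePair c ∨ s = neswPair c := by
  obtain rfl | ⟨e, he⟩ := s.eq_empty_or_nonempty
  · exact Or.inl rfl
  have hsub := subset_pair_reflect hs hcov he
  by_cases hr : reflect c e ∈ s
  · have : s = {e, reflect c e} := hsub.antisymm (insert_subset he (singleton_subset_iff.2 hr))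
    exact Or.inr (Or.inr (this ▸ pair_reflect_eq c (hs he)))
  · refine Or.inr (Or.inl ⟨e, hs he, eq_singleton_iff_unique_mem.2 ⟨he, fun f hf => ?_⟩⟩)
    rcases mem_insert.1 (hsub hf) with h | h
    · exact h
    · exact absurd (mem_singleton.1 h ▸ hf) hr

end Cell

/-- The local move of domino shuffling on the state `s` of the cell centred at `c`; `b` chooses
the pair put into an empty cell. -/
def shuffleCell (c : ℤ × ℤ) (s : Finset (Sym2 (ℤ × ℤ))) (b : Prop) [Decidable b] :
    Finset (Sym2 (ℤ × ℤ)) :=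
  if s = ∅ then (if b then nwsePair c else neswPair c)
  else if #s = 1 then s.image (reflect c) else ∅

section Weights

variable (ω ω' : Sym2 (ℤ × ℤ) → ℝ) (c : ℤ × ℤ)

def nwseWeight : ℝ := ω (nwEdge c.1 c.2) * ω (seEdge c.1 c.2)

def neswWeight : ℝ := ω (neEdge c.1 c.2) * ω (swEdge c.1 c.2)

/-- An empty cell carries the term of `1 = (ω(NW) ω(SE) + ω(NE) ω(SW)) / D_ω` chosen by `b`. -/
noncomputable def cellWeight (s : Finset (Sym2 (ℤ × ℤ))) (b : Prop) [Decidable b] : ℝ :=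
  if s = ∅ then (if b then nwseWeight ω c else neswWeight ω c) / cellFactor ω c.1 c.2
  else ∏ e ∈ s, ω e

/-- An empty cell carries the term of `D_ω = ω(NW) ω(SE) + ω(NE) ω(SW)` chosen by `b`. -/
noncomputable def reducedCellWeight (s : Finset (Sym2 (ℤ × ℤ))) (b : Prop) [Decidable b] : ℝ :=
  if s = ∅ then (if b then nwseWeight ω c else neswWeight ω c)
  else cellFactor ω c.1 c.2 * ∏ e ∈ s, ω' e

end Weights

section ShuffleCell

variable {c : ℤ × ℤ} {b b' : Prop} [Decidable b] [Decidable b']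

lemma nwEdge_ne_seEdge : nwEdge c.1 c.2 ≠ seEdge c.1 c.2 := by
  simpa using (reflect_ne c (e := nwEdge c.1 c.2) (by simp [cellEdges])).symm

lemma neEdge_ne_swEdge : neEdge c.1 c.2 ≠ swEdge c.1 c.2 := by
  simpa using (reflect_ne c (e := neEdge c.1 c.2) (by simp [cellEdges])).symm

lemma nwsePair_ne_neswPair : nwsePair c ≠ neswPair c := by
  intro h
  have : nwEdge c.1 c.2 ∈ neswPair c := h ▸ mem_insert_self _ _
  simp only [neswPair, nwEdge, neEdge, swEdge, mem_insert, mem_singleton, Sym2.eq_iff,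
    Prod.mk.injEq] at this
  omega

lemma nwsePair_ne_empty : nwsePair c ≠ ∅ := insert_ne_empty _ _

lemma singleton_ne_nwsePair (e : Sym2 (ℤ × ℤ)) : {e} ≠ nwsePair c := fun h => by
  simpa [nwsePair, card_pair nwEdge_ne_seEdge] using congrArg card h

@[simp] lemma shuffleCell_empty :
    shuffleCell c ∅ b = if b then nwsePair c else neswPair c := if_pos rfl

@[simp] lemma shuffleCell_singleton (e : Sym2 (ℤ × ℤ)) : shuffleCell c {e} b = {reflect c e} := by
  simp [shuffleCell]

@[simp] lemma shuffleCell_nwsePair : shuffleCell c (nwsePair c) b = ∅ := by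
  simp [shuffleCell, nwsePair, card_pair nwEdge_ne_seEdge]

@[simp] lemma shuffleCell_neswPair : shuffleCell c (neswPair c) b = ∅ := by
  simp [shuffleCell, neswPair, card_pair neEdge_ne_swEdge]

lemma coverCount_nwsePair (v : ℤ × ℤ) :
    coverCount (nwsePair c) v = if v ∈ cellVerts c then 1 else 0 := by
  rw [nwsePair, ← reflect_nwEdge]
  exact coverCount_pair_reflect c (by simp [cellEdges]) v

lemma coverCount_neswPair (v : ℤ × ℤ) :
    coverCount (neswPair c) v = if v ∈ cellVerts c then 1 else 0 := by
  rw [neswPair, ← reflect_neEdge]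
  exact coverCount_pair_reflect c (by simp [cellEdges]) v

variable {s : Finset (Sym2 (ℤ × ℤ))} (hs : s ⊆ cellEdges c) (hcov : ∀ v, coverCount s v ≤ 1)
include hs hcov

lemma shuffleCell_subset_cellEdges : shuffleCell c s b ⊆ cellEdges c := by
  rcases eq_empty_or_singleton_or_pair hs hcov with rfl | ⟨e, he, rfl⟩ | rfl | rfl
  · rw [shuffleCell_empty]
    split_ifs <;> simp [nwsePair, neswPair, cellEdges, insert_subset_iff]
  · simpa using reflect_mem_cellEdges c he
  all_goals simp

lemma coverCount_shuffleCell_add (v : ℤ × ℤ) :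
    coverCount (shuffleCell c s b) v + coverCount s v = if v ∈ cellVerts c then 1 else 0 := by
  rcases eq_empty_or_singleton_or_pair hs hcov with rfl | ⟨e, he, rfl⟩ | rfl | rfl
  · by_cases hb : b <;> simp [hb, coverCount_nwsePair, coverCount_neswPair]
  · rw [shuffleCell_singleton, coverCount_singleton, coverCount_singleton, add_comm,
      indicator_add_indicator_reflect c he]
  · simp [coverCount_nwsePair]
  · simp [coverCount_neswPair]

lemma shuffleCell_shuffleCell (hb' : b' ↔ s = nwsePair c) :
    shuffleCell c (shuffleCell c s b) b' = s := by
  rcases eq_empty_or_singleton_or_pair hs hcov with rfl | ⟨e, he, rfl⟩ | rfl | rfl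
  · rw [shuffleCell_empty]
    split_ifs <;> simp
  · simp [reflect_reflect]
  · rw [shuffleCell_nwsePair, shuffleCell_empty, if_pos (hb'.2 rfl)]
  · rw [shuffleCell_neswPair, shuffleCell_empty,
      if_neg fun h => nwsePair_ne_neswPair (hb'.1 h).symm]

lemma shuffleCell_eq_nwsePair_iff : shuffleCell c s b = nwsePair c ↔ s = ∅ ∧ b := by
  rcases eq_empty_or_singleton_or_pair hs hcov with rfl | ⟨e, he, rfl⟩ | rfl | rfl
  · rw [shuffleCell_empty]
    split_ifs with hb <;> simp [hb, nwsePair_ne_neswPair.symm]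
  · simp [singleton_ne_nwsePair]
  · simp [nwsePair_ne_empty, nwsePair_ne_empty.symm]
  · rw [shuffleCell_neswPair]
    simp [neswPair, nwsePair_ne_empty.symm]

lemma cellWeight_eq_reducedCellWeight_shuffleCell {ω ω' : Sym2 (ℤ × ℤ) → ℝ}
    (hD : cellFactor ω c.1 c.2 ≠ 0)
    (hred : ∀ e ∈ shuffleCell c s b, ω' e = ω (reflect c e) / cellFactor ω c.1 c.2)
    (hb' : b' ↔ s = nwsePair c) :
    cellWeight ω c s b = reducedCellWeight ω ω' c (shuffleCell c s b) b' := by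
  rcases eq_empty_or_singleton_or_pair hs hcov with rfl | ⟨e, he, rfl⟩ | rfl | rfl
  · rw [shuffleCell_empty] at hred ⊢
    by_cases hb : b
    · simp only [if_pos hb, nwsePair, mem_insert, mem_singleton] at hred ⊢
      simp only [cellWeight, reducedCellWeight, if_pos hb, if_true, insert_ne_empty, if_false,
        prod_pair nwEdge_ne_seEdge, hred _ (Or.inl rfl), hred _ (Or.inr rfl), nwseWeight,
        reflect_nwEdge, reflect_seEdge]
      field_simp
    · simp only [if_neg hb, neswPair, mem_insert, mem_singleton] at hred ⊢
      simp only [cellWeight, reducedCellWeight, if_neg hb, if_true, insert_ne_empty, if_false,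
        prod_pair neEdge_ne_swEdge, hred _ (Or.inl rfl), hred _ (Or.inr rfl), neswWeight,
        reflect_neEdge, reflect_swEdge]
      field_simp
  · rw [shuffleCell_singleton] at hred ⊢
    simp only [cellWeight, reducedCellWeight, singleton_ne_empty, if_false, prod_singleton,
      hred _ (mem_singleton_self _), reflect_reflect]
    field_simp
  · rw [shuffleCell_nwsePair, cellWeight, reducedCellWeight, if_neg nwsePair_ne_empty, if_pos rfl,
      if_pos (hb'.2 rfl), nwsePair, prod_pair nwEdge_ne_seEdge, nwseWeight]
  · rw [shuffleCell_neswPair, cellWeight, reducedCellWeight, neswPair, if_neg (insert_ne_empty _ _),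
      if_pos rfl, ← neswPair, if_neg fun h => nwsePair_ne_neswPair (hb'.1 h).symm, neswPair,
      prod_pair neEdge_ne_swEdge, neswWeight]

end ShuffleCell

noncomputable def cellCenters (k : ℕ) : Finset (ℤ × ℤ) :=
  {c ∈ Icc (-(k : ℤ)) k ×ˢ Icc (-(k : ℤ)) k | IsCellCenter k c.1 c.2}

lemma mem_cellCenters {k : ℕ} {c : ℤ × ℤ} : c ∈ cellCenters k ↔ IsCellCenter k c.1 c.2 := by
  simp only [cellCenters, mem_filter, mem_product, mem_Icc, and_iff_right_iff_imp]
  rintro ⟨-, -, hp, hq⟩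
  rw [abs_le] at hp hq
  omega

lemma mem_aztecSet_iff {k : ℕ} {v : ℤ × ℤ} : v ∈ aztecSet k ↔
    (v.1 + v.2) % 2 = 1 ∧ -(k : ℤ) ≤ v.1 ∧ v.1 ≤ k ∧ -(k : ℤ) ≤ v.2 ∧ v.2 ≤ k := by
  simp only [aztecSet, Set.mem_ofPred_eq, Int.odd_iff, abs_le, and_assoc]

lemma cellCenters_zero : cellCenters 0 = ∅ := by
  ext c
  simp only [mem_cellCenters, IsCellCenter, notMem_empty, iff_false, abs_le]
  omega

lemma aztecSet_zero : aztecSet 0 = ∅ := by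
  ext v
  simp only [mem_aztecSet_iff, Set.mem_empty_iff_false, iff_false]
  omega

lemma aztecSet_mono {k : ℕ} : aztecSet k ⊆ aztecSet (k + 1) := by
  intro v hv
  rw [mem_aztecSet_iff] at hv ⊢
  push_cast
  omega

lemma aztec_mono {k : ℕ} : aztec k ≤ aztec (k + 1) :=
  fun _ _ ⟨hu, hv, h⟩ => ⟨aztecSet_mono hu, aztecSet_mono hv, h⟩

lemma mem_aztecSet_of_mem_cellVerts {k : ℕ} {c v : ℤ × ℤ} (hc : c ∈ cellCenters k)
    (hv : v ∈ cellVerts c) : v ∈ aztecSet k := by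
  rw [mem_cellCenters, IsCellCenter, abs_le, abs_le] at hc
  simp only [cellVerts, mem_insert, mem_singleton, Prod.ext_iff] at hv
  rw [mem_aztecSet_iff]
  omega

lemma mem_edgeSet_of_mem_cellEdges {k : ℕ} {c : ℤ × ℤ} {e : Sym2 (ℤ × ℤ)}
    (he : e ∈ cellEdges c) (hk : ∀ v ∈ e, v ∈ aztecSet k) : e ∈ (aztec k).edgeSet := by
  rcases (mem_cellEdges c).1 he with rfl | rfl | rfl | rfl <;>
    exact ⟨hk _ (Sym2.mem_mk_left _ _), hk _ (Sym2.mem_mk_right _ _), by ring⟩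

lemma mk_mem_cellEdges {c u v : ℤ × ℤ} (hu : u ∈ cellVerts c) (hv : v ∈ cellVerts c)
    (huv : (u.1 - v.1) ^ 2 + (u.2 - v.2) ^ 2 = 2) : s(u, v) ∈ cellEdges c := by
  simp only [cellVerts, mem_insert, mem_singleton] at hu hv
  rcases hu with rfl | rfl | rfl | rfl <;> rcases hv with rfl | rfl | rfl | rfl <;>
    ring_nf at huv <;> simp_all [cellEdges, nwEdge, neEdge, swEdge, seEdge, Sym2.eq_swap]

lemma sq_add_sq_eq_two {a b : ℤ} (h : a ^ 2 + b ^ 2 = 2) : (a = 1 ∨ a = -1) ∧ (b = 1 ∨ b = -1) := by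
  have ha : a ≤ 1 := by nlinarith [sq_nonneg b]
  have ha' : -1 ≤ a := by nlinarith [sq_nonneg b]
  have hb : b ≤ 1 := by nlinarith [sq_nonneg a]
  have hb' : -1 ≤ b := by nlinarith [sq_nonneg a]
  interval_cases a <;> interval_cases b <;> simp_all

lemma exists_mem_cellEdges {k : ℕ} {e : Sym2 (ℤ × ℤ)} (he : e ∈ (aztec k).edgeSet) :
    ∃ c ∈ cellCenters k, e ∈ cellEdges c := by
  induction e using Sym2.ind with | _ u v =>
  obtain ⟨hu, hv, huv⟩ := (SimpleGraph.mem_edgeSet _).1 he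
  obtain ⟨hx, hy⟩ := sq_add_sq_eq_two huv
  rw [mem_aztecSet_iff] at hu hv
  -- of the two unit squares having `s(u, v)` as a side, the one centred at `(u.1, v.2)` or the
  -- one centred at `(v.1, u.2)`, exactly one has its centre of the parity of a cell of `A_k`
  by_cases hp : (u.1 - (k + 1)) % 2 = 0
  · refine ⟨(u.1, v.2), ?_, mk_mem_cellEdges ?_ ?_ huv⟩ <;>
      simp only [mem_cellCenters, IsCellCenter, abs_le, cellVerts, mem_insert, mem_singleton,
        Prod.ext_iff, true_and, and_true] <;> omega
  · refine ⟨(v.1, u.2), ?_, mk_mem_cellEdges ?_ ?_ huv⟩ <;>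
      simp only [mem_cellCenters, IsCellCenter, abs_le, cellVerts, mem_insert, mem_singleton,
        Prod.ext_iff, true_and, and_true] <;> omega

lemma eq_of_mem_cellEdges {k : ℕ} {c c' : ℤ × ℤ} (hc : c ∈ cellCenters k) (hc' : c' ∈ cellCenters k)
    {e : Sym2 (ℤ × ℤ)} (he : e ∈ cellEdges c) (he' : e ∈ cellEdges c') : c = c' := by
  obtain ⟨hp, hq, -, -⟩ := mem_cellCenters.1 hc
  obtain ⟨hp', hq', -, -⟩ := mem_cellCenters.1 hc'
  rcases (mem_cellEdges c).1 he with rfl | rfl | rfl | rfl <;>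
    simp only [mem_cellEdges, nwEdge, neEdge, swEdge, seEdge, Sym2.eq_iff, Prod.ext_iff] at he' <;>
    rw [Prod.ext_iff] <;> omega

lemma card_cellCenters_filter_mem_cellVerts {k : ℕ} {v : ℤ × ℤ} (hv : v ∈ aztecSet (k + 1)) :
    #{c ∈ cellCenters (k + 1) | v ∈ cellVerts c} = if v ∈ aztecSet k then 2 else 1 := by
  have hfilter : {c ∈ cellCenters (k + 1) | v ∈ cellVerts c} =
      {c ∈ cellVerts v | IsCellCenter (k + 1) c.1 c.2} := by
    ext c
    simp only [mem_filter, mem_cellCenters, cellVerts, mem_insert, mem_singleton, Prod.ext_iff]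
    rw [and_comm]
    refine and_congr_left fun _ => ?_
    omega
  obtain ⟨x, y⟩ := v
  rw [hfilter, card_filter, cellVerts, sum_insert, sum_insert, sum_insert, sum_singleton]
  · rw [mem_aztecSet_iff] at hv ⊢
    simp only [IsCellCenter, abs_le] at hv ⊢
    push_cast at hv ⊢
    split_ifs <;> omega
  all_goals simp only [mem_insert, mem_singleton, Prod.ext_iff, not_or]; omega

lemma coe_cellCenters (k : ℕ) :
    (cellCenters k : Set (ℤ × ℤ)) = {c | IsCellCenter k c.1 c.2} := by
  ext c
  simp [mem_cellCenters]

lemma pairwiseDisjoint_cellEdges (k : ℕ) :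
    (cellCenters k : Set (ℤ × ℤ)).PairwiseDisjoint cellEdges :=
  fun _ hc _ hc' hne => disjoint_left.2 fun _ he he' => hne (eq_of_mem_cellEdges hc hc' he he')

lemma mem_aztecSet_of_mem_edgeSet {k : ℕ} {e : Sym2 (ℤ × ℤ)} (he : e ∈ (aztec k).edgeSet)
    {v : ℤ × ℤ} (hv : v ∈ e) : v ∈ aztecSet k := by
  induction e using Sym2.ind with | _ a b =>
  obtain ⟨ha, hb, -⟩ := (SimpleGraph.mem_edgeSet _).1 he
  rcases Sym2.mem_iff.1 hv with rfl | rfl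
  · exact ha
  · exact hb

lemma biUnion_inter_cellEdges {k : ℕ} {M : Finset (Sym2 (ℤ × ℤ))}
    (hM : ∀ e ∈ M, e ∈ (aztec k).edgeSet) :
    (cellCenters k).biUnion (fun c => M ∩ cellEdges c) = M := by
  ext e
  simp only [mem_biUnion, mem_inter]
  refine ⟨fun ⟨_, _, he, _⟩ => he, fun he => ?_⟩
  obtain ⟨c, hc, hec⟩ := exists_mem_cellEdges (hM e he)
  exact ⟨c, hc, he, hec⟩

noncomputable def shuffle (k : ℕ) (M : Finset (Sym2 (ℤ × ℤ))) (d : Finset (ℤ × ℤ)) :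
    Finset (Sym2 (ℤ × ℤ)) :=
  (cellCenters k).biUnion fun c => shuffleCell c (M ∩ cellEdges c) (c ∈ d)

noncomputable def emptyCells (k : ℕ) (M : Finset (Sym2 (ℤ × ℤ))) : Finset (ℤ × ℤ) :=
  {c ∈ cellCenters k | M ∩ cellEdges c = ∅}

noncomputable def nwseCells (k : ℕ) (M : Finset (Sym2 (ℤ × ℤ))) : Finset (ℤ × ℤ) :=
  {c ∈ cellCenters k | M ∩ cellEdges c = nwsePair c}

section Shuffle

variable {k : ℕ} {M : Finset (Sym2 (ℤ × ℤ))} (hcov : ∀ v, coverCount M v ≤ 1)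
include hcov

lemma coverCount_inter_cellEdges_le (c : ℤ × ℤ) (v : ℤ × ℤ) :
    coverCount (M ∩ cellEdges c) v ≤ 1 :=
  (coverCount_mono inter_subset_left v).trans (hcov v)

lemma shuffleCell_inter_subset_cellEdges (d : Finset (ℤ × ℤ)) (c : ℤ × ℤ) :
    shuffleCell c (M ∩ cellEdges c) (c ∈ d) ⊆ cellEdges c :=
  shuffleCell_subset_cellEdges inter_subset_right (coverCount_inter_cellEdges_le hcov c)

lemma exists_mem_cellEdges_of_mem_shuffle {d : Finset (ℤ × ℤ)} {e : Sym2 (ℤ × ℤ)}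
    (he : e ∈ shuffle k M d) : ∃ c ∈ cellCenters k, e ∈ cellEdges c :=
  let ⟨c, hc, hec⟩ := mem_biUnion.1 he
  ⟨c, hc, shuffleCell_inter_subset_cellEdges hcov d c hec⟩

lemma shuffle_inter_cellEdges (d : Finset (ℤ × ℤ)) {c : ℤ × ℤ} (hc : c ∈ cellCenters k) :
    shuffle k M d ∩ cellEdges c = shuffleCell c (M ∩ cellEdges c) (c ∈ d) := by
  have hsub := shuffleCell_inter_subset_cellEdges hcov d
  ext e
  simp only [shuffle, mem_inter, mem_biUnion]
  refine ⟨fun ⟨⟨c', hc', he⟩, hec⟩ => ?_, fun he => ⟨⟨c, hc, he⟩, hsub c he⟩⟩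
  rwa [eq_of_mem_cellEdges hc' hc (hsub c' he) hec] at he

lemma nwseCells_shuffle {d : Finset (ℤ × ℤ)} (hd : d ⊆ emptyCells k M) :
    nwseCells k (shuffle k M d) = d := by
  ext c
  simp only [nwseCells, mem_filter]
  constructor
  · rintro ⟨hc, h⟩
    rw [shuffle_inter_cellEdges hcov d hc, shuffleCell_eq_nwsePair_iff inter_subset_right
      (coverCount_inter_cellEdges_le hcov c)] at h
    exact h.2
  · intro hcd
    obtain ⟨hc, hempty⟩ := mem_filter.1 (hd hcd)
    rw [shuffle_inter_cellEdges hcov d hc, hempty, shuffleCell_empty, if_pos hcd]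
    exact ⟨hc, rfl⟩

lemma nwseCells_subset_emptyCells_shuffle (d : Finset (ℤ × ℤ)) :
    nwseCells k M ⊆ emptyCells k (shuffle k M d) := by
  intro c hc
  obtain ⟨hc, hpair⟩ := mem_filter.1 hc
  refine mem_filter.2 ⟨hc, ?_⟩
  rw [shuffle_inter_cellEdges hcov d hc, hpair, shuffleCell_nwsePair]

lemma shuffle_shuffle (hM : ∀ e ∈ M, e ∈ (aztec k).edgeSet) (d : Finset (ℤ × ℤ)) :
    shuffle k (shuffle k M d) (nwseCells k M) = M := by
  conv_rhs => rw [← biUnion_inter_cellEdges hM]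
  refine biUnion_congr rfl fun c hc => ?_
  rw [shuffle_inter_cellEdges hcov d hc, shuffleCell_shuffleCell inter_subset_right
    (coverCount_inter_cellEdges_le hcov c) (by simp [nwseCells, hc])]

lemma coverCount_shuffle_add (hM : ∀ e ∈ M, e ∈ (aztec k).edgeSet) (d : Finset (ℤ × ℤ))
    (v : ℤ × ℤ) :
    coverCount (shuffle k M d) v + coverCount M v = #{c ∈ cellCenters k | v ∈ cellVerts c} := by
  have hshuffle : coverCount (shuffle k M d) v =
      ∑ c ∈ cellCenters k, coverCount (shuffleCell c (M ∩ cellEdges c) (c ∈ d)) v :=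
    coverCount_biUnion ((pairwiseDisjoint_cellEdges k).mono
      (shuffleCell_inter_subset_cellEdges hcov d)) v
  have hM : coverCount M v = ∑ c ∈ cellCenters k, coverCount (M ∩ cellEdges c) v := by
    conv_lhs => rw [← biUnion_inter_cellEdges hM]
    exact coverCount_biUnion ((pairwiseDisjoint_cellEdges k).mono fun _ => inter_subset_right) v
  rw [hshuffle, hM, ← sum_add_distrib, card_filter]
  exact sum_congr rfl fun c _ => coverCount_shuffleCell_add inter_subset_right
    (coverCount_inter_cellEdges_le hcov c) v

end Shuffle

section PerfectMatching

variable {k : ℕ} {M : Finset (Sym2 (ℤ × ℤ))}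

lemma coverCount_le_one_of_isPM_aztec (hM : IsPM (aztec k) (aztecSet k) M) (v : ℤ × ℤ) :
    coverCount M v ≤ 1 :=
  coverCount_le_one_of_isPM hM (fun _ he _ hv => mem_aztecSet_of_mem_edgeSet he hv) v

lemma isPM_shuffle_of_isPM_succ (hM : IsPM (aztec (k + 1)) (aztecSet (k + 1)) M)
    (d : Finset (ℤ × ℤ)) : IsPM (aztec k) (aztecSet k) (shuffle (k + 1) M d) := by
  have hcov := coverCount_le_one_of_isPM_aztec hM
  have hcount := coverCount_shuffle_add hcov hM.1 d
  have hone := (isPM_iff_coverCount.1 hM).2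
  refine isPM_iff_coverCount.2 ⟨fun e he => ?_, fun v hv => ?_⟩
  · obtain ⟨c, hc, hce⟩ := exists_mem_cellEdges_of_mem_shuffle hcov he
    refine mem_edgeSet_of_mem_cellEdges hce fun w hw => ?_
    have hwk : w ∈ aztecSet (k + 1) :=
      mem_aztecSet_of_mem_cellVerts hc (mem_cellVerts_of_mem c hce hw)
    by_contra hw'
    have := hcount w
    rw [card_cellCenters_filter_mem_cellVerts hwk, if_neg hw', hone w hwk] at this
    have := one_le_coverCount he hw
    omega
  · have := hcount v
    rw [card_cellCenters_filter_mem_cellVerts (aztecSet_mono hv), if_pos hv,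
      hone v (aztecSet_mono hv)] at this
    omega

lemma isPM_shuffle_succ_of_isPM (hM : IsPM (aztec k) (aztecSet k) M) (d : Finset (ℤ × ℤ)) :
    IsPM (aztec (k + 1)) (aztecSet (k + 1)) (shuffle (k + 1) M d) := by
  have hcov := coverCount_le_one_of_isPM_aztec hM
  have hcount := coverCount_shuffle_add hcov
    (fun e he => SimpleGraph.edgeSet_mono aztec_mono (hM.1 e he)) d
  have hone := (isPM_iff_coverCount.1 hM).2
  refine isPM_iff_coverCount.2 ⟨fun e he => ?_, fun v hv => ?_⟩
  · obtain ⟨c, hc, hce⟩ := exists_mem_cellEdges_of_mem_shuffle hcov he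
    exact mem_edgeSet_of_mem_cellEdges hce fun w hw =>
      mem_aztecSet_of_mem_cellVerts hc (mem_cellVerts_of_mem c hce hw)
  · have := hcount v
    rw [card_cellCenters_filter_mem_cellVerts hv] at this
    split_ifs at this with hvk
    · rw [hone v hvk] at this
      omega
    · rw [coverCount_eq_zero fun e he hve => hvk (mem_aztecSet_of_mem_edgeSet (hM.1 e he) hve)]
        at this
      omega

end PerfectMatching

noncomputable def perfectMatchings (k : ℕ) : Finset (Finset (Sym2 (ℤ × ℤ))) :=
  {M ∈ ((cellCenters k).biUnion cellEdges).powerset | IsPM (aztec k) (aztecSet k) M}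

lemma mem_perfectMatchings {k : ℕ} {M : Finset (Sym2 (ℤ × ℤ))} :
    M ∈ perfectMatchings k ↔ IsPM (aztec k) (aztecSet k) M := by
  refine mem_filter.trans ⟨fun h => h.2, fun h => ⟨mem_powerset.2 fun e he => ?_, h⟩⟩
  obtain ⟨c, hc, hec⟩ := exists_mem_cellEdges (h.1 e he)
  exact mem_biUnion.2 ⟨c, hc, hec⟩

lemma mSum_eq_sum_perfectMatchings (k : ℕ) (ω : Sym2 (ℤ × ℤ) → ℝ) :
    mSum (aztec k) (aztecSet k) ω = ∑ M ∈ perfectMatchings k, ∏ e ∈ M, ω e := by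
  have : {M | IsPM (aztec k) (aztecSet k) M} = ↑(perfectMatchings k) :=
    Set.ext fun _ => mem_perfectMatchings.symm
  rw [mSum, this, finsum_mem_coe_finset]

lemma mSum_aztec_zero (ω : Sym2 (ℤ × ℤ) → ℝ) : mSum (aztec 0) (aztecSet 0) ω = 1 := by
  have : perfectMatchings 0 = {∅} := by
    simp [perfectMatchings, cellCenters_zero, IsPM, aztecSet_zero]
  rw [mSum_eq_sum_perfectMatchings, this, sum_singleton, prod_empty]

/-- The Aztec reduction rule `ω'(e) = ω(opp e) / D_ω(c(e))` on the edges of `A_k`, where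
`c(e) = c` and `opp e = reflect c e`. -/
def IsReduction (k : ℕ) (ω ω' : Sym2 (ℤ × ℤ) → ℝ) : Prop :=
  ∀ c ∈ cellCenters (k + 1), ∀ e ∈ cellEdges c, e ∈ (aztec k).edgeSet →
    ω' e = ω (reflect c e) / cellFactor ω c.1 c.2

section Step

variable {k : ℕ} {ω ω' : Sym2 (ℤ × ℤ) → ℝ} {M : Finset (Sym2 (ℤ × ℤ))}

lemma prod_eq_sum_prod_cellWeight (hD : ∀ c ∈ cellCenters k, cellFactor ω c.1 c.2 ≠ 0)
    (hM : ∀ e ∈ M, e ∈ (aztec k).edgeSet) :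
    ∏ e ∈ M, ω e = ∑ d ∈ (emptyCells k M).powerset,
      ∏ c ∈ cellCenters k, cellWeight ω c (M ∩ cellEdges c) (c ∈ d) := by
  simp only [cellWeight, ite_div]
  rw [emptyCells, sum_powerset_filter_prod_ite]
  conv_lhs => rw [← biUnion_inter_cellEdges hM,
    prod_biUnion ((pairwiseDisjoint_cellEdges k).mono fun _ => inter_subset_right)]
  refine prod_congr rfl fun c hc => ?_
  split_ifs with h
  · rw [h, prod_empty, ← add_div]
    exact (div_self (hD c hc)).symm
  · rfl

lemma prod_cellFactor_mul_prod_eq_sum (hM : ∀ e ∈ M, e ∈ (aztec k).edgeSet) :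
    (∏ c ∈ cellCenters k, cellFactor ω c.1 c.2) * ∏ e ∈ M, ω' e =
      ∑ d ∈ (emptyCells k M).powerset,
        ∏ c ∈ cellCenters k, reducedCellWeight ω ω' c (M ∩ cellEdges c) (c ∈ d) := by
  simp only [reducedCellWeight]
  rw [emptyCells, sum_powerset_filter_prod_ite]
  conv_lhs => rw [← biUnion_inter_cellEdges hM,
    prod_biUnion ((pairwiseDisjoint_cellEdges k).mono fun _ => inter_subset_right),
    ← prod_mul_distrib]
  refine prod_congr rfl fun c _ => ?_
  split_ifs with h
  · rw [h, prod_empty, mul_one]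
    rfl
  · rfl

lemma prod_cellWeight_eq_prod_reducedCellWeight_shuffle
    (hD : ∀ c ∈ cellCenters (k + 1), cellFactor ω c.1 c.2 ≠ 0) (hred : IsReduction k ω ω')
    (hM : IsPM (aztec (k + 1)) (aztecSet (k + 1)) M) (d : Finset (ℤ × ℤ)) :
    ∏ c ∈ cellCenters (k + 1), cellWeight ω c (M ∩ cellEdges c) (c ∈ d) =
      ∏ c ∈ cellCenters (k + 1),
        reducedCellWeight ω ω' c (shuffle (k + 1) M d ∩ cellEdges c) (c ∈ nwseCells (k + 1) M) := by
  have hcov := coverCount_le_one_of_isPM_aztec hM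
  refine prod_congr rfl fun c hc => ?_
  have hcell := coverCount_inter_cellEdges_le hcov c
  rw [shuffle_inter_cellEdges hcov d hc]
  refine cellWeight_eq_reducedCellWeight_shuffleCell inter_subset_right hcell (hD c hc)
    (fun e he => hred c hc e (shuffleCell_subset_cellEdges inter_subset_right hcell he)
      ((isPM_shuffle_of_isPM_succ hM d).1 e (mem_biUnion.2 ⟨c, hc, he⟩))) ?_
  simp [nwseCells, hc]

end Step

lemma isReduction_of_cellwise {k : ℕ} {ω ω' : Sym2 (ℤ × ℤ) → ℝ}
    (h : ∀ p q : ℤ, IsCellCenter (k + 1) p q →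
      (nwEdge p q ∈ (aztec k).edgeSet →
        ω' (nwEdge p q) = ω (seEdge p q) / cellFactor ω p q) ∧
      (neEdge p q ∈ (aztec k).edgeSet →
        ω' (neEdge p q) = ω (swEdge p q) / cellFactor ω p q) ∧
      (swEdge p q ∈ (aztec k).edgeSet →
        ω' (swEdge p q) = ω (neEdge p q) / cellFactor ω p q) ∧
      (seEdge p q ∈ (aztec k).edgeSet →
        ω' (seEdge p q) = ω (nwEdge p q) / cellFactor ω p q)) :
    IsReduction k ω ω' := by
  intro c hc e he hk
  obtain ⟨hnw, hne, hsw, hse⟩ := h c.1 c.2 (mem_cellCenters.1 hc)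
  rcases (mem_cellEdges c).1 he with rfl | rfl | rfl | rfl
  · rw [reflect_nwEdge, hnw hk]
  · rw [reflect_neEdge, hne hk]
  · rw [reflect_swEdge, hsw hk]
  · rw [reflect_seEdge, hse hk]

theorem mSum_aztec_succ {k : ℕ} {ω ω' : Sym2 (ℤ × ℤ) → ℝ}
    (hD : ∀ c ∈ cellCenters (k + 1), cellFactor ω c.1 c.2 ≠ 0) (hred : IsReduction k ω ω') :
    mSum (aztec (k + 1)) (aztecSet (k + 1)) ω =
      (∏ c ∈ cellCenters (k + 1), cellFactor ω c.1 c.2) * mSum (aztec k) (aztecSet k) ω' := by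
  have hup : ∀ {M}, IsPM (aztec k) (aztecSet k) M → ∀ e ∈ M, e ∈ (aztec (k + 1)).edgeSet :=
    fun hM e he => SimpleGraph.edgeSet_mono aztec_mono (hM.1 e he)
  rw [mSum_eq_sum_perfectMatchings, mSum_eq_sum_perfectMatchings, mul_sum,
    sum_congr rfl fun M hM => prod_eq_sum_prod_cellWeight hD (mem_perfectMatchings.1 hM).1,
    sum_congr rfl fun M hM => prod_cellFactor_mul_prod_eq_sum (ω := ω) (ω' := ω')
      (hup (mem_perfectMatchings.1 hM)), sum_sigma', sum_sigma']
  refine sum_nbij' (fun p => ⟨shuffle (k + 1) p.1 p.2, nwseCells (k + 1) p.1⟩)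
    (fun p => ⟨shuffle (k + 1) p.1 p.2, nwseCells (k + 1) p.1⟩) ?_ ?_ ?_ ?_ ?_
  · rintro ⟨M, d⟩ h
    have hM := mem_perfectMatchings.1 (mem_sigma.1 h).1
    exact mem_sigma.2 ⟨mem_perfectMatchings.2 (isPM_shuffle_of_isPM_succ hM d), mem_powerset.2
      (nwseCells_subset_emptyCells_shuffle (coverCount_le_one_of_isPM_aztec hM) d)⟩
  · rintro ⟨M, d⟩ h
    have hM := mem_perfectMatchings.1 (mem_sigma.1 h).1
    exact mem_sigma.2 ⟨mem_perfectMatchings.2 (isPM_shuffle_succ_of_isPM hM d), mem_powerset.2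
      (nwseCells_subset_emptyCells_shuffle (coverCount_le_one_of_isPM_aztec hM) d)⟩
  · rintro ⟨M, d⟩ h
    obtain ⟨hM, hd⟩ := mem_sigma.1 h
    have hcov := coverCount_le_one_of_isPM_aztec (mem_perfectMatchings.1 hM)
    dsimp only
    rw [shuffle_shuffle hcov (mem_perfectMatchings.1 hM).1,
      nwseCells_shuffle hcov (mem_powerset.1 hd)]
  · rintro ⟨M, d⟩ h
    obtain ⟨hM, hd⟩ := mem_sigma.1 h
    have hcov := coverCount_le_one_of_isPM_aztec (mem_perfectMatchings.1 hM)
    dsimp only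
    rw [shuffle_shuffle hcov (hup (mem_perfectMatchings.1 hM)),
      nwseCells_shuffle hcov (mem_powerset.1 hd)]
  · rintro ⟨M, d⟩ h
    exact prod_cellWeight_eq_prod_reducedCellWeight_shuffle hD hred
      (mem_perfectMatchings.1 (mem_sigma.1 h).1) d

end AztecDiamond

theorem aztec_iterated_reduction_general (n : ℕ) (ω : ℕ → Sym2 (ℤ × ℤ) → ℝ)
    (hD : ∀ k ∈ Finset.Icc 1 n, ∀ p q : ℤ, IsCellCenter k p q →
      cellFactor (ω k) p q ≠ 0)
    (hrec : ∀ k ∈ Finset.Icc 1 n, ∀ p q : ℤ, IsCellCenter k p q →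
      (nwEdge p q ∈ (aztec (k - 1)).edgeSet →
        ω (k - 1) (nwEdge p q) = ω k (seEdge p q) / cellFactor (ω k) p q) ∧
      (neEdge p q ∈ (aztec (k - 1)).edgeSet →
        ω (k - 1) (neEdge p q) = ω k (swEdge p q) / cellFactor (ω k) p q) ∧
      (swEdge p q ∈ (aztec (k - 1)).edgeSet →
        ω (k - 1) (swEdge p q) = ω k (neEdge p q) / cellFactor (ω k) p q) ∧
      (seEdge p q ∈ (aztec (k - 1)).edgeSet →
        ω (k - 1) (seEdge p q) = ω k (nwEdge p q) / cellFactor (ω k) p q)) :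
    mSum (aztec n) (aztecSet n) (ω n)
      = ∏ k ∈ Finset.Icc 1 n,
          ∏ᶠ c ∈ {c : ℤ × ℤ | IsCellCenter k c.1 c.2}, cellFactor (ω k) c.1 c.2 := by
  simp_rw [← AztecDiamond.coe_cellCenters, finprod_mem_coe_finset]
  induction n with
  | zero => rw [AztecDiamond.mSum_aztec_zero, Finset.Icc_eq_empty (by omega), Finset.prod_empty]
  | succ n ih =>
    have hn : n + 1 ∈ Finset.Icc 1 (n + 1) := Finset.mem_Icc.2 ⟨by omega, le_rfl⟩
    have hle : Finset.Icc 1 n ⊆ Finset.Icc 1 (n + 1) := Finset.Icc_subset_Icc_right n.le_succ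
    rw [Finset.prod_Icc_succ_top (by omega), ← ih (fun k hk => hD k (hle hk))
      (fun k hk => hrec k (hle hk)), mul_comm, AztecDiamond.mSum_aztec_succ
        (fun c hc => hD _ hn c.1 c.2 (AztecDiamond.mem_cellCenters.1 hc))
        (AztecDiamond.isReduction_of_cellwise (hrec _ hn)), Nat.add_sub_cancel]

/-- **Iterated reduction formula**: if `ω_n, ω_{n−1}, …, ω_0` is a sequence of
weight functions in which each `ω_{k−1}` is obtained from `ω_k` by the Aztec
reduction rule `ω_{k−1}(e) = ω_k(opp e) / D_{ω_k}(c(e))` on the edges of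
`A_{k−1}`, all cell-factors encountered being nonzero, then `M(A_n, ω_n)` is the
product over `k = 1, …, n` of the products of all cell-factors of `A_k` with
respect to `ω_k` — in particular a product of `n² + (n−1)² + ⋯ + 1²` cell-factors. -/
theorem aztec_iterated_reduction (n : ℕ) (ω : ℕ → Sym2 (ℤ × ℤ) → ℝ)
    (hnonneg : ∀ e ∈ (aztec n).edgeSet, 0 ≤ ω n e)
    (hD : ∀ k ∈ Finset.Icc 1 n, ∀ p q : ℤ, IsCellCenter k p q →
      cellFactor (ω k) p q ≠ 0)
    (hrec : ∀ k ∈ Finset.Icc 1 n, ∀ p q : ℤ, IsCellCenter k p q →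
      (nwEdge p q ∈ (aztec (k - 1)).edgeSet →
        ω (k - 1) (nwEdge p q) = ω k (seEdge p q) / cellFactor (ω k) p q) ∧
      (neEdge p q ∈ (aztec (k - 1)).edgeSet →
        ω (k - 1) (neEdge p q) = ω k (swEdge p q) / cellFactor (ω k) p q) ∧
      (swEdge p q ∈ (aztec (k - 1)).edgeSet →
        ω (k - 1) (swEdge p q) = ω k (neEdge p q) / cellFactor (ω k) p q) ∧
      (seEdge p q ∈ (aztec (k - 1)).edgeSet →
        ω (k - 1) (seEdge p q) = ω k (nwEdge p q) / cellFactor (ω k) p q)) :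
    mSum (aztec n) (aztecSet n) (ω n)
      = ∏ k ∈ Finset.Icc 1 n,
          ∏ᶠ c ∈ {c : ℤ × ℤ | IsCellCenter k c.1 c.2}, cellFactor (ω k) c.1 c.2 :=
  aztec_iterated_reduction_general n ω hD hrec
end
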